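/- arXiv:2509.03050 — 5 statements merged into one kernel-verified Lean document; each statement's English description precedes it below -/
import Mathlib

section
/- For every unit i and every set S ∈ S_i^β, the coefficient estimator is unbiased: E[α̂_{i,S}] = α_{i,S}. -/
noncomputable section

namespace SNIPE

open Finset

/-- The collection `S_i^β` of subsets of the in-neighborhood of unit `i` of size at most `β`. -/
def Sb (n β : ℕ) (Nb : Fin n → Finset (Fin n)) (i : Fin n) : Finset (Finset (Fin n)) :=
  (Nb i).powerset.filter fun s => s.card ≤ β

/-- `g(S) = ∏_{j∈S}(1-p_j) - ∏_{j∈S}(-p_j)`. -/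
def gcoef {n : ℕ} (prob : Fin n → ℝ) (s : Finset (Fin n)) : ℝ :=
  (∏ j ∈ s, (1 - prob j)) - ∏ j ∈ s, (-prob j)

/-- The SNIPE weight `ω_i`, as a function of the treatment realization `z`. -/
def wt (n β : ℕ) (Nb : Fin n → Finset (Fin n)) (prob : Fin n → ℝ) (i : Fin n)
    (z : Fin n → ℝ) : ℝ :=
  ∑ s ∈ Sb n β Nb i, gcoef prob s * ∏ j ∈ s, (z j - prob j) / (prob j * (1 - prob j))

/-- The β-order interaction potential-outcome model `Y_i(z) = ∑_{S∈S_i^β} α_{i,S} ∏_{j∈S} z_j`. -/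
def Ypot (n β : ℕ) (Nb : Fin n → Finset (Fin n)) (α : Fin n → Finset (Fin n) → ℝ)
    (i : Fin n) (z : Fin n → ℝ) : ℝ :=
  ∑ s ∈ Sb n β Nb i, α i s * ∏ j ∈ s, z j

/-- The coefficient estimator `α̂_{i,S}`, where `Yval` is the observed outcome of unit `i`. -/
def alphaHat (n β : ℕ) (Nb : Fin n → Finset (Fin n)) (prob : Fin n → ℝ)
    (Yval : ℝ) (i : Fin n) (s : Finset (Fin n)) (z : Fin n → ℝ) : ℝ :=
  Yval * (∏ j ∈ s, (-1 / prob j)) *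
    ∑ u ∈ (Sb n β Nb i).filter (fun u => s ⊆ u), ∏ l ∈ u, (prob l - z l) / (1 - prob l)

/-- The ℓ2 norm of a finite real vector. -/
def l2 {d : ℕ} (v : Fin d → ℝ) : ℝ := Real.sqrt (∑ k, v k ^ 2)

/-- The covariance of two real random variables. -/
def covr {Ω : Type*} [MeasurableSpace Ω] (μ : MeasureTheory.Measure Ω) (f h : Ω → ℝ) : ℝ :=
  (∫ x, f x * h x ∂μ) - (∫ x, f x ∂μ) * ∫ x, h x ∂μ

/-- A randomized experiment on a population of `n` units joined by a directed interference
network with all self-loops: treatments `Z_i` are mutually independent `Bernoulli(p_i)` random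
variables with `p_i ∈ [p, 1-p]`, outcomes follow the `β`-order interaction model with
coefficients `α`, and each unit carries a deterministic covariate vector `X_i ∈ ℝ^{dX}`. -/
structure Setting (β dX : ℕ) (p : ℝ) where
  n : ℕ
  Ω : Type
  [mΩ : MeasurableSpace Ω]
  μ : MeasureTheory.Measure Ω
  isProb : MeasureTheory.IsProbabilityMeasure μ
  prob : Fin n → ℝ
  prob_mem : ∀ i, p ≤ prob i ∧ prob i ≤ 1 - p
  Z : Fin n → Ω → ℝ
  Z_meas : ∀ i, Measurable (Z i)
  Z_indep : ProbabilityTheory.iIndepFun Z μ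
  Z_range : ∀ i x, Z i x = 0 ∨ Z i x = 1
  Z_prob : ∀ i, μ (Z i ⁻¹' {1}) = ENNReal.ofReal (prob i)
  Nb : Fin n → Finset (Fin n)
  self_mem : ∀ i, i ∈ Nb i
  α : Fin n → Finset (Fin n) → ℝ
  X : Fin n → Fin dX → ℝ

attribute [instance] Setting.mΩ

open MeasureTheory ProbabilityTheory Filter Topology

namespace Setting

variable {β dX : ℕ} {p : ℝ}

/-- The SNIPE weight `ω_i` as a random variable. -/
def w (St : Setting β dX p) (i : Fin St.n) (x : St.Ω) : ℝ :=
  wt St.n β St.Nb St.prob i fun j => St.Z j x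

/-- The observed outcome `Y_i = Y_i(Z)`. -/
def Yo (St : Setting β dX p) (i : Fin St.n) (x : St.Ω) : ℝ :=
  Ypot St.n β St.Nb St.α i fun j => St.Z j x

/-- The total treatment effect `TTE = (1/n) ∑_i (Y_i(1) - Y_i(0))`. -/
def tte (St : Setting β dX p) : ℝ :=
  (St.n : ℝ)⁻¹ * ∑ i,
    (Ypot St.n β St.Nb St.α i (fun _ => 1) - Ypot St.n β St.Nb St.α i fun _ => 0)

/-- The covariate-adjusted SNIPE estimator `TTÊ(θ) = (1/n) ∑_i ω_i (Y_i - θᵀ X_i)`. -/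
def tteHat (St : Setting β dX p) (θ : Fin dX → ℝ) (x : St.Ω) : ℝ :=
  (St.n : ℝ)⁻¹ * ∑ i, St.w i x * (St.Yo i x - ∑ k, θ k * St.X i k)

/-- Expectation with respect to the design measure. -/
def E (St : Setting β dX p) (f : St.Ω → ℝ) : ℝ := ∫ x, f x ∂St.μ

/-- The units `i'` whose in-neighborhood intersects that of `i`. -/
def nbrs (St : Setting β dX p) (i : Fin St.n) : Finset (Fin St.n) :=
  univ.filter fun i' => (St.Nb i ∩ St.Nb i').Nonempty

/-- The coefficient estimator `α̂_{i,S}` as a random variable. -/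
def ahat (St : Setting β dX p) (i : Fin St.n) (s : Finset (Fin St.n)) (x : St.Ω) : ℝ :=
  alphaHat St.n β St.Nb St.prob (St.Yo i x) i s fun j => St.Z j x

/-- The Gram matrix `(1/n) ∑_i ω_i² X_i X_iᵀ` (a random matrix). -/
def regGramAt (St : Setting β dX p) (x : St.Ω) : Matrix (Fin dX) (Fin dX) ℝ :=
  Matrix.of fun k l : Fin dX => (St.n : ℝ)⁻¹ * ∑ i, St.w i x ^ 2 * St.X i k * St.X i l

/-- `E[(1/n) ∑_i ω_i² X_i X_iᵀ]`. -/
def regGram (St : Setting β dX p) : Matrix (Fin dX) (Fin dX) ℝ :=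
  Matrix.of fun k l : Fin dX =>
    St.E fun x => (St.n : ℝ)⁻¹ * ∑ i, St.w i x ^ 2 * St.X i k * St.X i l

/-- The regression-based adjustment coefficient estimator `θ̂_Reg`. -/
def thetaHatReg (St : Setting β dX p) (x : St.Ω) : Fin dX → ℝ :=
  Matrix.mulVec (St.regGramAt x)⁻¹
    fun k => (St.n : ℝ)⁻¹ * ∑ i, St.w i x ^ 2 * St.X i k * St.Yo i x

/-- The population regression-based adjustment coefficient `θ_Reg`. -/
def thetaReg (St : Setting β dX p) : Fin dX → ℝ :=
  Matrix.mulVec St.regGram⁻¹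
    fun k => St.E fun x => (St.n : ℝ)⁻¹ * ∑ i, St.w i x ^ 2 * St.X i k * St.Yo i x

/-- The matrix `G = E[(1/n²) ∑_i ∑_{i' : N_i ∩ N_{i'} ≠ ∅} ω_i ω_{i'} X_i X_{i'}ᵀ]`. -/
def Gmat (St : Setting β dX p) : Matrix (Fin dX) (Fin dX) ℝ :=
  Matrix.of fun k l : Fin dX => St.E fun x =>
    (((St.n : ℝ)) ^ 2)⁻¹ * ∑ i, ∑ i' ∈ St.nbrs i, St.w i x * St.w i' x * St.X i k * St.X i' l

/-- `E[(1/n) ∑_{i' : N_i ∩ N_{i'} ≠ ∅} ω_i ω_{i'} X_{i'} ∏_{k∈S} Z_k]`. -/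
def vimE (St : Setting β dX p) (i : Fin St.n) (s : Finset (Fin St.n)) (k : Fin dX) : ℝ :=
  St.E fun x =>
    (St.n : ℝ)⁻¹ * ∑ i' ∈ St.nbrs i, St.w i x * St.w i' x * St.X i' k * ∏ t ∈ s, St.Z t x

/-- The VIM adjustment coefficient estimator `θ̂_VIM`. -/
def thetaHatVIM (St : Setting β dX p) (x : St.Ω) : Fin dX → ℝ :=
  Matrix.mulVec St.Gmat⁻¹ fun k =>
    (St.n : ℝ)⁻¹ * ∑ i, ∑ s ∈ Sb St.n β St.Nb i, St.ahat i s x * St.vimE i s k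

/-- The population VIM adjustment coefficient `θ_VIM`. -/
def thetaVIM (St : Setting β dX p) : Fin dX → ℝ :=
  Matrix.mulVec St.Gmat⁻¹ fun k => St.E fun x =>
    (((St.n : ℝ)) ^ 2)⁻¹ * ∑ i, ∑ i' ∈ St.nbrs i, St.w i x * St.w i' x * St.X i k * St.Yo i' x

/-- The matrix `M` with `M_{ii'} = ∑_{S ∈ S_i^β ∩ S_{i'}^β} g(S)² ∏_{j∈S} 1/(p_j(1-p_j))`. -/
def Mmat (St : Setting β dX p) : Matrix (Fin St.n) (Fin St.n) ℝ :=
  Matrix.of fun i i' : Fin St.n => ∑ s ∈ Sb St.n β St.Nb i ∩ Sb St.n β St.Nb i',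
    gcoef St.prob s ^ 2 * ∏ j ∈ s, (St.prob j * (1 - St.prob j))⁻¹

/-- The matrix `(1/n) Xᵀ M X`. -/
def XtMX (St : Setting β dX p) : Matrix (Fin dX) (Fin dX) ℝ :=
  Matrix.of fun k l : Fin dX => (St.n : ℝ)⁻¹ * ∑ i, ∑ i', St.X i k * St.Mmat i i' * St.X i' l

/-- Potential outcome under the all-ones assignment. -/
def Y1 (St : Setting β dX p) (i : Fin St.n) : ℝ := Ypot St.n β St.Nb St.α i fun _ => 1

/-- Potential outcome under the all-zeros assignment. -/
def Y0 (St : Setting β dX p) (i : Fin St.n) : ℝ := Ypot St.n β St.Nb St.α i fun _ => 0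

/-- `S_XX = (1/n) ∑_i (X_i - X̄)(X_i - X̄)ᵀ`. -/
def SXX (St : Setting β dX p) : Matrix (Fin dX) (Fin dX) ℝ :=
  Matrix.of fun k l : Fin dX => (St.n : ℝ)⁻¹ * ∑ i,
    (St.X i k - (St.n : ℝ)⁻¹ * ∑ i', St.X i' k) * (St.X i l - (St.n : ℝ)⁻¹ * ∑ i', St.X i' l)

/-- `S_XY(1) = (1/n) ∑_i (X_i - X̄)(Y_i(1) - Ȳ_1)`. -/
def SXY1 (St : Setting β dX p) : Fin dX → ℝ := fun k => (St.n : ℝ)⁻¹ * ∑ i,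
  (St.X i k - (St.n : ℝ)⁻¹ * ∑ i', St.X i' k) * (St.Y1 i - (St.n : ℝ)⁻¹ * ∑ i', St.Y1 i')

/-- `S_XY(0) = (1/n) ∑_i (X_i - X̄)(Y_i(0) - Ȳ_0)`. -/
def SXY0 (St : Setting β dX p) : Fin dX → ℝ := fun k => (St.n : ℝ)⁻¹ * ∑ i,
  (St.X i k - (St.n : ℝ)⁻¹ * ∑ i', St.X i' k) * (St.Y0 i - (St.n : ℝ)⁻¹ * ∑ i', St.Y0 i')

/-- `θ_Lin = (1-p₁) S_XX⁻¹ S_XY(1) + p₁ S_XX⁻¹ S_XY(0)`. -/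
def thetaLin (St : Setting β dX p) (p1 : ℝ) : Fin dX → ℝ := fun k =>
  (1 - p1) * Matrix.mulVec St.SXX⁻¹ St.SXY1 k + p1 * Matrix.mulVec St.SXX⁻¹ St.SXY0 k

/-- The OLS slope coefficient of `Y` on `X` (regression with an intercept) within group `G`. -/
def olsSlope (St : Setting β dX p) (G : Finset (Fin St.n)) (x : St.Ω) : Fin dX → ℝ :=
  Matrix.mulVec
    (Matrix.of fun k l : Fin dX =>
      ∑ i ∈ G, (St.X i k - (G.card : ℝ)⁻¹ * ∑ i' ∈ G, St.X i' k) *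
               (St.X i l - (G.card : ℝ)⁻¹ * ∑ i' ∈ G, St.X i' l))⁻¹
    fun k => ∑ i ∈ G, (St.X i k - (G.card : ℝ)⁻¹ * ∑ i' ∈ G, St.X i' k) *
               (St.Yo i x - (G.card : ℝ)⁻¹ * ∑ i' ∈ G, St.Yo i' x)

/-- Lin's adjustment coefficient estimator
`θ̂_Lin = ((1/n)∑(1-Z_i)) θ̂_1 + ((1/n)∑ Z_i) θ̂_0`. -/
def thetaHatLin (St : Setting β dX p) (x : St.Ω) : Fin dX → ℝ := fun k =>
  ((St.n : ℝ)⁻¹ * ∑ i, (1 - St.Z i x)) *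
      St.olsSlope (univ.filter fun i => St.Z i x = 1) x k +
    ((St.n : ℝ)⁻¹ * ∑ i, St.Z i x) *
      St.olsSlope (univ.filter fun i => St.Z i x = 0) x k

/-- Assumption 3 (boundedness): `X_max ≤ C` and `Y_max ≤ C`. -/
def Assumption3 (St : Setting β dX p) (C : ℝ) : Prop :=
  (∀ i, (∑ k, |St.X i k|) ≤ C) ∧ ∀ i, (∑ s ∈ Sb St.n β St.Nb i, |St.α i s|) ≤ C

/-- Assumption 4 (invertibility): the smallest eigenvalues of `(1/n) XᵀX` and `(1/n) XᵀMX`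
are bounded below by `c`. -/
def Assumption4 (St : Setting β dX p) (c : ℝ) : Prop :=
  (∀ v : Fin dX → ℝ, c * (∑ k, v k ^ 2) ≤
      ∑ k, ∑ l, v k * ((St.n : ℝ)⁻¹ * ∑ i, St.X i k * St.X i l) * v l) ∧
    ∀ v : Fin dX → ℝ, c * (∑ k, v k ^ 2) ≤ ∑ k, ∑ l, v k * St.XtMX k l * v l

/-- All in-degrees and out-degrees of the interference network are at most `D`. -/
def degBdd (St : Setting β dX p) (D : ℕ) : Prop :=
  (∀ i, (St.Nb i).card ≤ D) ∧ ∀ j, (univ.filter fun i => j ∈ St.Nb i).card ≤ D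

end Setting

/-- A sequence of (vector-valued) random variables, over a sequence of experimental settings,
converges to zero in probability. -/
def convInProbToZero {β dX : ℕ} {p : ℝ} (S : ℕ → Setting β dX p)
    (f : ∀ m, (S m).Ω → Fin dX → ℝ) : Prop :=
  ∀ ε : ℝ, 0 < ε →
    Filter.Tendsto (fun m => (S m).μ {x | ε ≤ l2 (f m x)}) Filter.atTop (nhds (0 : ENNReal))

end SNIPE

open MeasureTheory ProbabilityTheory Filter Finset Topology SNIPE

/-!
Expanding `Y_i` in the monomials `∏_{j ∈ T} Z_j`, each term of `E[α̂_{i,S}]` is a multiple of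
`E[∏_{j ∈ T} Z_j ∏_{l ∈ U} (p_l - Z_l)/(1 - p_l)]`. By independence this factorizes over units,
and the single-unit means vanish for `l ∈ U \ T`, so the term is `∏_{j ∈ T} p_j (-1)^|U|` when
`U ⊆ T` and `0` otherwise. The alternating sum of `(-1)^|U|` over `S ⊆ U ⊆ T` vanishes unless
`T = S`, leaving exactly `α_{i,S}`.
-/

theorem Finset.sum_Icc_neg_one_pow_card {α R : Type*} [DecidableEq α] [CommRing R]
    (s t : Finset α) :
    ∑ u ∈ Icc s t, (-1 : R) ^ #u = if s = t then (-1) ^ #s else 0 := by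
  by_cases hst : s ⊆ t
  · have hinj : Set.InjOn (s ∪ ·) ((t \ s).powerset : Set (Finset α)) := fun v hv w hw hvw => by
      have hv' := disjoint_of_subset_right (mem_powerset.mp hv) disjoint_sdiff
      have hw' := disjoint_of_subset_right (mem_powerset.mp hw) disjoint_sdiff
      rw [← union_sdiff_cancel_left hv', ← union_sdiff_cancel_left hw']
      exact congrArg (· \ s) hvw
    have hcard : ∀ v ∈ (t \ s).powerset, #(s ∪ v) = #s + #v := fun v hv =>
      card_union_of_disjoint (disjoint_of_subset_right (mem_powerset.mp hv) disjoint_sdiff)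
    have halt : ∑ v ∈ (t \ s).powerset, (-1 : R) ^ #v = if t \ s = ∅ then 1 else 0 := by
      exact_mod_cast congrArg (Int.cast : ℤ → R) sum_powerset_neg_one_pow_card
    rw [Icc_eq_image_powerset hst, sum_image hinj, sum_congr rfl fun v hv => by rw [hcard v hv],
      sum_congr rfl fun v _ => pow_add _ _ _, ← mul_sum, halt]
    by_cases hts : t ⊆ s
    · rw [if_pos (sdiff_eq_empty_iff_subset.mpr hts), if_pos (hst.antisymm hts), mul_one]
    · rw [if_neg (mt sdiff_eq_empty_iff_subset.mp hts), if_neg fun h => hts h.ge, mul_zero]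
  · rw [Icc_eq_empty hst, sum_empty, if_neg fun h => hst h.le]

section Bernoulli

variable {Ω ι : Type*} [MeasurableSpace Ω] {μ : Measure Ω}

theorem eq_affine_of_eq_zero_or_eq_one (f : ℝ → ℝ) {z : ℝ} (hz : z = 0 ∨ z = 1) :
    f z = f 0 + (f 1 - f 0) * z := by
  rcases hz with rfl | rfl <;> ring

theorem integral_comp_of_bernoulli [IsProbabilityMeasure μ] {Z : Ω → ℝ} {q : ℝ}
    (hZm : Measurable Z) (hZ : ∀ x, Z x = 0 ∨ Z x = 1) (hq : 0 ≤ q)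
    (hZq : μ (Z ⁻¹' {1}) = ENNReal.ofReal q) (f : ℝ → ℝ) :
    ∫ x, f (Z x) ∂μ = f 0 + (f 1 - f 0) * q := by
  have hmeas : MeasurableSet (Z ⁻¹' {1}) := hZm (measurableSet_singleton 1)
  have hZ_ind : ∀ x, Z x = (Z ⁻¹' {1}).indicator 1 x := fun x => by
    rcases hZ x with h | h <;> simp [h]
  have hZint : Integrable Z μ :=
    ((integrable_const 1).indicator hmeas).congr (ae_of_all _ fun x => (hZ_ind x).symm)
  have hmean : ∫ x, Z x ∂μ = q := by
    rw [integral_congr_ae (ae_of_all _ hZ_ind), integral_indicator_one hmeas, measureReal_def,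
      hZq, ENNReal.toReal_ofReal hq]
  rw [integral_congr_ae (ae_of_all _ fun x => eq_affine_of_eq_zero_or_eq_one f (hZ x)),
    integral_add (integrable_const _) (hZint.const_mul _), integral_const_mul, hmean]
  simp

variable [Fintype ι] {Z : ι → Ω → ℝ}

theorem integrable_prod_comp_of_eq_zero_or_eq_one [IsFiniteMeasure μ]
    (hZm : ∀ i, Measurable (Z i)) (hZ : ∀ i x, Z i x = 0 ∨ Z i x = 1) (f : ι → ℝ → ℝ) :
    Integrable (fun x => ∏ i, f i (Z i x)) μ := by
  have hmeas : Measurable fun x => ∏ i, (f i 0 + (f i 1 - f i 0) * Z i x) := by fun_prop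
  refine Integrable.of_bound (C := ∏ i, (|f i 0| + |f i 1|)) ?_ (ae_of_all _ fun x => ?_)
  · refine hmeas.aestronglyMeasurable.congr (ae_of_all _ fun x => ?_)
    exact prod_congr rfl fun i _ => (eq_affine_of_eq_zero_or_eq_one (f i) (hZ i x)).symm
  · rw [Real.norm_eq_abs, abs_prod]
    refine prod_le_prod (fun i _ => abs_nonneg _) fun i _ => ?_
    rcases hZ i x with h | h <;> simp [h]

theorem integral_prod_comp_of_eq_zero_or_eq_one (hZi : iIndepFun Z μ)
    (hZm : ∀ i, Measurable (Z i)) (hZ : ∀ i x, Z i x = 0 ∨ Z i x = 1) (f : ι → ℝ → ℝ) :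
    ∫ x, ∏ i, f i (Z i x) ∂μ = ∏ i, ∫ x, f i (Z i x) ∂μ := by
  -- replacing each `f i` by its affine interpolant on `{0, 1}` supplies the measurability
  have hf : ∀ i x, f i (Z i x) = f i 0 + (f i 1 - f i 0) * Z i x := fun i x =>
    eq_affine_of_eq_zero_or_eq_one (f i) (hZ i x)
  simp only [hf]
  exact hZi.integral_fun_prod_comp (f := fun i z => f i 0 + (f i 1 - f i 0) * z)
    (fun i => (hZm i).aemeasurable) fun i => (by fun_prop : Measurable _).aestronglyMeasurable

end Bernoulli

namespace SNIPE

theorem Icc_eq_filter_Sb {n β : ℕ} {Nb : Fin n → Finset (Fin n)} {i : Fin n}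
    {s t : Finset (Fin n)} (ht : t ∈ Sb n β Nb i) :
    Icc s t = {u ∈ Sb n β Nb i | s ⊆ u ∧ u ⊆ t} := by
  simp only [Sb, mem_filter, mem_powerset] at ht
  ext u
  simp only [Sb, mem_Icc, mem_filter, mem_powerset]
  exact ⟨fun h => ⟨⟨h.2.trans ht.1, (card_le_card h.2).trans ht.2⟩, h⟩, fun h => h.2⟩

namespace Setting

variable {β dX : ℕ} {p : ℝ} (St : Setting β dX p)

theorem prod_Z_mul_prod_centered_eq (T U : Finset (Fin St.n)) (x : St.Ω) :
    (∏ j ∈ T, St.Z j x) * ∏ l ∈ U, (St.prob l - St.Z l x) / (1 - St.prob l) =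
      ∏ l, (if l ∈ T then St.Z l x else 1) *
        if l ∈ U then (St.prob l - St.Z l x) / (1 - St.prob l) else 1 := by
  rw [prod_mul_distrib, Fintype.prod_ite_mem, Fintype.prod_ite_mem]

theorem integrable_prod_Z_mul_prod_centered (T U : Finset (Fin St.n)) :
    Integrable (fun x => (∏ j ∈ T, St.Z j x) *
      ∏ l ∈ U, (St.prob l - St.Z l x) / (1 - St.prob l)) St.μ := by
  have := St.isProb
  simp only [prod_Z_mul_prod_centered_eq]
  exact integrable_prod_comp_of_eq_zero_or_eq_one St.Z_meas St.Z_range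
    fun l z => (if l ∈ T then z else 1) * if l ∈ U then (St.prob l - z) / (1 - St.prob l) else 1

theorem integral_prod_Z_mul_prod_centered (h0 : ∀ l, 0 ≤ St.prob l) (h1 : ∀ l, St.prob l < 1)
    (T U : Finset (Fin St.n)) :
    ∫ x, (∏ j ∈ T, St.Z j x) * ∏ l ∈ U, (St.prob l - St.Z l x) / (1 - St.prob l) ∂St.μ =
      (∏ j ∈ T, St.prob j) * if U ⊆ T then (-1) ^ #U else 0 := by
  have := St.isProb
  have hfactor : ∀ l, ∫ x, (if l ∈ T then St.Z l x else 1) *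
      (if l ∈ U then (St.prob l - St.Z l x) / (1 - St.prob l) else 1) ∂St.μ =
      (if l ∈ T then St.prob l else 1) * if l ∈ U then (if l ∈ T then -1 else 0) else 1 := by
    intro l
    have hne : 1 - St.prob l ≠ 0 := (sub_pos.mpr (h1 l)).ne'
    rw [integral_comp_of_bernoulli (St.Z_meas l) (St.Z_range l) (h0 l) (St.Z_prob l)
      fun z => (if l ∈ T then z else 1) * if l ∈ U then (St.prob l - z) / (1 - St.prob l) else 1]
    split_ifs <;> field_simp <;> ring
  simp only [prod_Z_mul_prod_centered_eq]
  rw [integral_prod_comp_of_eq_zero_or_eq_one St.Z_indep St.Z_meas St.Z_range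
    fun l z => (if l ∈ T then z else 1) * if l ∈ U then (St.prob l - z) / (1 - St.prob l) else 1]
  simp only [hfactor, prod_mul_distrib, Fintype.prod_ite_mem, prod_ite_zero, prod_const,
    subset_iff]

theorem ahat_eq_sum (i : Fin St.n) (s : Finset (Fin St.n)) (x : St.Ω) :
    St.ahat i s x = ∑ T ∈ Sb St.n β St.Nb i, ∑ U ∈ Sb St.n β St.Nb i with s ⊆ U,
      St.α i T * (∏ j ∈ s, (-1 / St.prob j)) *
        ((∏ j ∈ T, St.Z j x) * ∏ l ∈ U, (St.prob l - St.Z l x) / (1 - St.prob l)) := by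
  simp only [ahat, alphaHat, Yo, Ypot]
  rw [sum_mul, sum_mul]
  refine sum_congr rfl fun T _ => ?_
  rw [mul_sum]
  exact sum_congr rfl fun U _ => by ring

theorem E_ahat_eq_sum (h0 : ∀ l, 0 ≤ St.prob l) (h1 : ∀ l, St.prob l < 1) (i : Fin St.n)
    (s : Finset (Fin St.n)) :
    St.E (St.ahat i s) = ∑ T ∈ Sb St.n β St.Nb i,
      St.α i T * (∏ j ∈ s, (-1 / St.prob j)) * (∏ j ∈ T, St.prob j) *
        if s = T then (-1) ^ #s else 0 := by
  have hint := St.integrable_prod_Z_mul_prod_centered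
  rw [E, integral_congr_ae (ae_of_all _ (St.ahat_eq_sum i s)), integral_finsetSum _
    fun T _ => integrable_finsetSum _ fun U _ => (hint T U).const_mul _]
  refine sum_congr rfl fun T hT => ?_
  rw [integral_finsetSum _ fun U _ => (hint T U).const_mul _, ← sum_Icc_neg_one_pow_card,
    Icc_eq_filter_Sb hT, ← filter_filter, sum_filter (· ⊆ T), mul_sum]
  refine sum_congr rfl fun U _ => ?_
  rw [integral_const_mul, St.integral_prod_Z_mul_prod_centered h0 h1]
  split_ifs <;> ring

end Setting
end SNIPE

theorem statement_0_general (β dX : ℕ) (p : ℝ) (hp : 0 < p)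
    (St : SNIPE.Setting β dX p)
    (i : Fin St.n) (s : Finset (Fin St.n)) (hs : s ∈ SNIPE.Sb St.n β St.Nb i) :
    St.E (St.ahat i s) = St.α i s := by
  have h0 : ∀ j, 0 < St.prob j := fun j => hp.trans_le (St.prob_mem j).1
  have h1 : ∀ j, St.prob j < 1 := fun j => (St.prob_mem j).2.trans_lt (by linarith)
  have hcancel : (∏ j ∈ s, (-1 / St.prob j)) * (∏ j ∈ s, St.prob j) * (-1) ^ #s = 1 := by
    rw [mul_assoc, mul_comm _ ((-1) ^ _), ← prod_neg, ← prod_mul_distrib]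
    exact prod_eq_one fun j _ => by field_simp [(h0 j).ne']
  rw [St.E_ahat_eq_sum (fun j => (h0 j).le) h1, sum_eq_single_of_mem s hs fun T _ hT => by
    rw [if_neg (Ne.symm hT), mul_zero], if_pos rfl]
  linear_combination St.α i s * hcancel

/-- unbiasedness of the coefficient estimators: for every unit `i` and
every `S ∈ S_i^β`, `E[α̂_(i,S)] = α_(i,S)`. -/
theorem statement_0 (β dX : ℕ) (hβ : 1 ≤ β) (p : ℝ) (hp : 0 < p) (hp' : p ≤ 1 / 2)
    (St : SNIPE.Setting β dX p)
    (i : Fin St.n) (s : Finset (Fin St.n)) (hs : s ∈ SNIPE.Sb St.n β St.Nb i) :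
    St.E (St.ahat i s) = St.α i s :=
  statement_0_general β dX p hp St i s hs
end
end

section
/- Pathwise (for every realization of the treatment vector Z), the SNIPE estimator equals the average of the nonempty-set coefficient estimators: (1/n) Σ_{i=1}^n Y_i Σ_{S ∈ S_i^β} g(S) ∏_{j∈S} (Z_j − p_j)/(p_j(1−p_j)) = (1/n) Σ_{i=1}^n Σ_{S ∈ S_i^β, S ≠ ∅} α̂_{i,S}. -/
noncomputable section

open MeasureTheory ProbabilityTheory Filter Finset Topology SNIPE

/-! With `q_l = (p_l - z_l) / (1 - p_l)`, the two products in `g(S)` turn the `S`-th SNIPE term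
into `(∏_{j∈S} (1 - 1/p_j) - 1) ∏_{l∈S} q_l`. Expanding the first product over the nonempty
`T ⊆ S` and exchanging the sums, which is legitimate because `S_i^β` is closed under taking
subsets, gives `∑_{T ≠ ∅} ∏_{j∈T} (-1/p_j) ∑_{U ⊇ T} ∏_{l∈U} q_l`, which times `Y_i` is
`∑_{T ≠ ∅} α̂_{i,T}`. -/

theorem Finset.prod_one_add_sub_one {ι R : Type*} [DecidableEq ι] [CommRing R] (a : ι → R)
    (u : Finset ι) : ∏ j ∈ u, (1 + a j) - 1 = ∑ s ∈ u.powerset.erase ∅, ∏ j ∈ s, a j := by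
  rw [prod_one_add, sum_erase_eq_sub (empty_mem_powerset u), prod_empty]

theorem Finset.sum_prod_one_add_sub_one_mul {ι R : Type*} [DecidableEq ι] [CommRing R]
    (P : Finset (Finset ι)) (hP : ∀ u ∈ P, ∀ s ⊆ u, s ∈ P) (a : ι → R) (b : Finset ι → R) :
    ∑ u ∈ P, (∏ j ∈ u, (1 + a j) - 1) * b u =
      ∑ s ∈ P.filter (fun s => s ≠ ∅), (∏ j ∈ s, a j) * ∑ u ∈ P.filter (fun u => s ⊆ u), b u := by
  simp only [prod_one_add_sub_one, sum_mul, mul_sum]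
  refine sum_comm' fun u s => ?_
  simp only [mem_erase, mem_powerset, mem_filter]
  exact ⟨fun ⟨hu, hs, hsu⟩ => ⟨⟨hu, hsu⟩, hP u hu s hsu, hs⟩,
    fun ⟨⟨hu, hsu⟩, _, hs⟩ => ⟨hu, hs, hsu⟩⟩

namespace SNIPE

theorem mem_Sb_of_subset {n β : ℕ} {Nb : Fin n → Finset (Fin n)} {i : Fin n}
    {u s : Finset (Fin n)} (hu : u ∈ Sb n β Nb i) (hsu : s ⊆ u) : s ∈ Sb n β Nb i := by
  simp only [Sb, mem_filter, mem_powerset] at hu ⊢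
  exact ⟨hsu.trans hu.1, (card_le_card hsu).trans hu.2⟩

theorem gcoef_mul_prod_eq {n : ℕ} (prob z : Fin n → ℝ) (s : Finset (Fin n))
    (hprob : ∀ j ∈ s, prob j ≠ 0) (hprob' : ∀ j ∈ s, 1 - prob j ≠ 0) :
    gcoef prob s * ∏ j ∈ s, (z j - prob j) / (prob j * (1 - prob j)) =
      (∏ j ∈ s, (1 + -1 / prob j) - 1) * ∏ l ∈ s, (prob l - z l) / (1 - prob l) := by
  rw [gcoef, sub_mul, sub_mul, one_mul, ← prod_mul_distrib, ← prod_mul_distrib,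
    ← prod_mul_distrib]
  congr 1 <;> refine prod_congr rfl fun j hj => ?_ <;>
    field_simp [hprob j hj, hprob' j hj] <;> ring

end SNIPE

theorem statement_1_general (n β : ℕ) (p : ℝ) (hp : 0 < p)
    (prob : Fin n → ℝ) (hprob : ∀ i, p ≤ prob i ∧ prob i ≤ 1 - p)
    (Nb : Fin n → Finset (Fin n))
    (Y : Fin n → ℝ) (z : Fin n → ℝ) :
    (n : ℝ)⁻¹ * ∑ i, Y i * ∑ s ∈ SNIPE.Sb n β Nb i, SNIPE.gcoef prob s *
        ∏ j ∈ s, (z j - prob j) / (prob j * (1 - prob j)) =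
      (n : ℝ)⁻¹ * ∑ i, ∑ s ∈ (SNIPE.Sb n β Nb i).filter (fun s => s ≠ ∅),
        SNIPE.alphaHat n β Nb prob (Y i) i s z := by
  have hprob_ne : ∀ j, prob j ≠ 0 := fun j => by linarith [(hprob j).1]
  have hprob_ne' : ∀ j, 1 - prob j ≠ 0 := fun j => by linarith [(hprob j).2]
  congr 1
  refine sum_congr rfl fun i _ => ?_
  simp only [alphaHat, mul_assoc, ← mul_sum]
  congr 1
  rw [sum_congr rfl fun s _ => gcoef_mul_prod_eq prob z s (fun j _ => hprob_ne j)
    fun j _ => hprob_ne' j]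
  exact sum_prod_one_add_sub_one_mul _ (fun u hu s hsu => mem_Sb_of_subset hu hsu) _ _

/-- pathwise identity: for every realization of the treatment vector,
the SNIPE estimator equals the average of the nonempty-set coefficient estimators. -/
theorem statement_1 (n β : ℕ) (hβ : 1 ≤ β) (p : ℝ) (hp : 0 < p) (hp' : p ≤ 1 / 2)
    (prob : Fin n → ℝ) (hprob : ∀ i, p ≤ prob i ∧ prob i ≤ 1 - p)
    (Nb : Fin n → Finset (Fin n)) (hself : ∀ i, i ∈ Nb i)
    (Y : Fin n → ℝ) (z : Fin n → ℝ) (hz : ∀ j, z j = 0 ∨ z j = 1) :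
    (n : ℝ)⁻¹ * ∑ i, Y i * ∑ s ∈ SNIPE.Sb n β Nb i, SNIPE.gcoef prob s *
        ∏ j ∈ s, (z j - prob j) / (prob j * (1 - prob j)) =
      (n : ℝ)⁻¹ * ∑ i, ∑ s ∈ (SNIPE.Sb n β Nb i).filter (fun s => s ≠ ∅),
        SNIPE.alphaHat n β Nb prob (Y i) i s z :=
  statement_1_general n β p hp prob hprob Nb Y z
end
end

section
/- For every unit i, E[ω_i] = 0 and E[ω_i²] = Σ_{S ∈ S_i^β} g(S)² ∏_{j∈S} 1/(p_j(1−p_j)); consequently 4 ≤ E[ω_i²] ≤ (e·d_in/(β·p(1−p)))^β. -/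
noncomputable section

open MeasureTheory ProbabilityTheory Filter Finset Topology SNIPE

/-!
Write `ω_i = ∑_S g(S) χ_S(Z)` with `χ_S(z) = ∏_{j∈S} (z_j - p_j)/(p_j(1-p_j))`. By independence,
`E[χ_S(Z) χ_T(Z)]` factorises over the coordinates: a coordinate in exactly one of `S`, `T`
contributes `E[Z_j - p_j] = 0`, one in both contributes `1/(p_j(1-p_j))`. So the `χ_S(Z)` are
orthogonal, and since `g(∅) = 0` this gives `E[ω_i] = 0` and the formula for `E[ω_i²]`.
The singleton `{i}` alone contributes `1/(p_i(1-p_i)) ≥ 4`. Conversely `|g(S)| ≤ 1`, so every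
term is at most `(p(1-p))^{-β}`, and there are at most `∑_{k≤β} C(d_in, k) ≤ (e d_in/β)^β` terms.
-/

namespace SNIPE

section Bernoulli

variable {Ω : Type*} [MeasurableSpace Ω] {μ : Measure Ω}

structure IsBernoulli (Z : Ω → ℝ) (μ : Measure Ω) (q : ℝ) : Prop where
  measurable : Measurable Z
  zero_or_one : ∀ x, Z x = 0 ∨ Z x = 1
  measure_preimage_one : μ (Z ⁻¹' {1}) = ENNReal.ofReal q

namespace IsBernoulli

variable {Z : Ω → ℝ} {q : ℝ}

lemma apply_eq (hZ : IsBernoulli Z μ q) (φ : ℝ → ℝ) (x : Ω) :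
    φ (Z x) = φ 0 + (φ 1 - φ 0) * Z x := by
  rcases hZ.zero_or_one x with h | h <;> simp [h]

lemma eq_indicator (hZ : IsBernoulli Z μ q) : Z = (Z ⁻¹' {1}).indicator 1 := by
  ext x
  rcases hZ.zero_or_one x with h | h <;> simp [h]

lemma measurable_comp (hZ : IsBernoulli Z μ q) (φ : ℝ → ℝ) : Measurable fun x => φ (Z x) := by
  simp_rw [hZ.apply_eq φ]
  exact measurable_const.add (hZ.measurable.const_mul _)

lemma abs_comp_le (hZ : IsBernoulli Z μ q) (φ : ℝ → ℝ) (x : Ω) :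
    |φ (Z x)| ≤ |φ 0| + |φ 1| := by
  rcases hZ.zero_or_one x with h | h <;> simp [h, abs_nonneg]

lemma integral_comp [IsProbabilityMeasure μ] (hZ : IsBernoulli Z μ q) (hq : 0 ≤ q)
    (φ : ℝ → ℝ) : ∫ x, φ (Z x) ∂μ = (1 - q) * φ 0 + q * φ 1 := by
  have hmeas : MeasurableSet (Z ⁻¹' {1}) := hZ.measurable (measurableSet_singleton 1)
  have hint : Integrable Z μ := hZ.eq_indicator ▸ (integrable_const 1).indicator hmeas
  have hmean : ∫ x, Z x ∂μ = q := by
    rw [hZ.eq_indicator, integral_indicator_one hmeas, measureReal_def,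
      hZ.measure_preimage_one, ENNReal.toReal_ofReal hq]
  simp_rw [hZ.apply_eq φ]
  rw [integral_add (integrable_const _) (hint.const_mul _), integral_const, integral_const_mul,
    hmean]
  simp only [probReal_univ, smul_eq_mul, one_mul]
  ring

end IsBernoulli

end Bernoulli

section IndependentBernoulli

variable {Ω ι : Type*} [MeasurableSpace Ω] {μ : Measure Ω} [Fintype ι] {Z : ι → Ω → ℝ}
  {q : ι → ℝ}

lemma integrable_prod_comp [IsFiniteMeasure μ] (hZ : ∀ j, IsBernoulli (Z j) μ (q j))
    (φ : ι → ℝ → ℝ) : Integrable (fun x => ∏ j, φ j (Z j x)) μ := by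
  refine Integrable.of_bound (Finset.measurable_prod _ fun j _ => (hZ j).measurable_comp (φ j)
    ).aestronglyMeasurable (∏ j, (|φ j 0| + |φ j 1|)) (Eventually.of_forall fun x => ?_)
  rw [Real.norm_eq_abs, Finset.abs_prod]
  exact Finset.prod_le_prod (fun j _ => abs_nonneg _) fun j _ => (hZ j).abs_comp_le (φ j) x

lemma integral_prod_comp [IsProbabilityMeasure μ] (hind : iIndepFun Z μ)
    (hZ : ∀ j, IsBernoulli (Z j) μ (q j)) (hq : ∀ j, 0 ≤ q j) (φ : ι → ℝ → ℝ) :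
    ∫ x, ∏ j, φ j (Z j x) ∂μ = ∏ j, ((1 - q j) * φ j 0 + q j * φ j 1) := by
  -- `φ j` itself need not be measurable, so pass to its affine interpolation through `0` and `1`.
  let ψ : ι → ℝ → ℝ := fun j t => φ j 0 + (φ j 1 - φ j 0) * t
  have hψ : ∀ j x, ψ j (Z j x) = φ j (Z j x) := fun j x => ((hZ j).apply_eq (φ j) x).symm
  have key := hind.integral_fun_prod_comp (f := ψ) (fun j => (hZ j).measurable.aemeasurable)
    fun j => (measurable_const.add (measurable_id.const_mul _)).aestronglyMeasurable
  simp only [hψ] at key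
  rw [key]
  exact Finset.prod_congr rfl fun j _ => (hZ j).integral_comp (hq j) (φ j)

end IndependentBernoulli

def chi {ι : Type*} (q : ι → ℝ) (s : Finset ι) (z : ι → ℝ) : ℝ :=
  ∏ j ∈ s, (z j - q j) / (q j * (1 - q j))

def chiFactor {ι : Type*} [DecidableEq ι] (q : ι → ℝ) (s : Finset ι) (j : ι) (u : ℝ) : ℝ :=
  if j ∈ s then (u - q j) / (q j * (1 - q j)) else 1

@[simp]
lemma chi_empty {ι : Type*} (q : ι → ℝ) (z : ι → ℝ) : chi q ∅ z = 1 :=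
  Finset.prod_empty

section Chi

variable {Ω ι : Type*} [MeasurableSpace Ω] {μ : Measure Ω} [Fintype ι] [DecidableEq ι]
  {Z : ι → Ω → ℝ} {q : ι → ℝ}

lemma chi_eq_prod_chiFactor (q : ι → ℝ) (s : Finset ι) (z : ι → ℝ) :
    chi q s z = ∏ j, chiFactor q s j (z j) := by
  simp only [chiFactor, Finset.prod_ite_mem, univ_inter, chi]

lemma integrable_chi_mul_chi [IsFiniteMeasure μ] (hZ : ∀ j, IsBernoulli (Z j) μ (q j))
    (s t : Finset ι) : Integrable (fun x => chi q s (Z · x) * chi q t (Z · x)) μ := by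
  simp_rw [chi_eq_prod_chiFactor, ← Finset.prod_mul_distrib]
  exact integrable_prod_comp hZ fun j u => chiFactor q s j u * chiFactor q t j u

lemma integral_chi_mul_chi [IsProbabilityMeasure μ] (hind : iIndepFun Z μ)
    (hZ : ∀ j, IsBernoulli (Z j) μ (q j)) (hq : ∀ j, 0 < q j ∧ q j < 1) (s t : Finset ι) :
    ∫ x, chi q s (Z · x) * chi q t (Z · x) ∂μ =
      if s = t then ∏ j ∈ s, (q j * (1 - q j))⁻¹ else 0 := by
  simp_rw [chi_eq_prod_chiFactor, ← Finset.prod_mul_distrib]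
  rw [integral_prod_comp hind hZ (fun j => (hq j).1.le)
    fun j u => chiFactor q s j u * chiFactor q t j u]
  have hfactor : ∀ j, (1 - q j) * (chiFactor q s j 0 * chiFactor q t j 0) +
      q j * (chiFactor q s j 1 * chiFactor q t j 1) =
      if j ∈ s then (if j ∈ t then (q j * (1 - q j))⁻¹ else 0) else (if j ∈ t then 0 else 1) := by
    intro j
    have h0 : q j ≠ 0 := (hq j).1.ne'
    have h1 : 1 - q j ≠ 0 := (sub_pos.2 (hq j).2).ne'
    unfold chiFactor
    split_ifs <;> field_simp <;> ring
  rw [Finset.prod_congr rfl fun j _ => hfactor j]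
  split_ifs with hst
  · subst hst
    simp +contextual
  · obtain ⟨j, hj⟩ : ∃ j, ¬(j ∈ s ↔ j ∈ t) := by
      by_contra! h
      exact hst (Finset.ext h)
    exact Finset.prod_eq_zero (mem_univ j) (by by_cases hs : j ∈ s <;> simp_all)

lemma integral_sum_chi [IsProbabilityMeasure μ] (hind : iIndepFun Z μ)
    (hZ : ∀ j, IsBernoulli (Z j) μ (q j)) (hq : ∀ j, 0 < q j ∧ q j < 1)
    (F : Finset (Finset ι)) (a : Finset ι → ℝ) :
    ∫ x, ∑ s ∈ F, a s * chi q s (Z · x) ∂μ = if ∅ ∈ F then a ∅ else 0 := by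
  have hint : ∀ s, Integrable (fun x => chi q s (Z · x)) μ := fun s => by
    simpa using integrable_chi_mul_chi hZ s ∅
  have hmean : ∀ s, ∫ x, chi q s (Z · x) ∂μ =
      if s = ∅ then ∏ j ∈ s, (q j * (1 - q j))⁻¹ else 0 := fun s => by
    rw [← integral_chi_mul_chi hind hZ hq s ∅]
    simp
  rw [integral_finsetSum _ fun s _ => (hint s).const_mul _]
  simp [integral_const_mul, hmean]

lemma integral_sum_chi_sq [IsProbabilityMeasure μ] (hind : iIndepFun Z μ)
    (hZ : ∀ j, IsBernoulli (Z j) μ (q j)) (hq : ∀ j, 0 < q j ∧ q j < 1)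
    (F : Finset (Finset ι)) (a : Finset ι → ℝ) :
    ∫ x, (∑ s ∈ F, a s * chi q s (Z · x)) ^ 2 ∂μ =
      ∑ s ∈ F, a s ^ 2 * ∏ j ∈ s, (q j * (1 - q j))⁻¹ := by
  have hexpand : ∀ x, (∑ s ∈ F, a s * chi q s (Z · x)) ^ 2 =
      ∑ s ∈ F, ∑ t ∈ F, a s * a t * (chi q s (Z · x) * chi q t (Z · x)) := fun x => by
    rw [sq, Finset.sum_mul_sum]
    exact Finset.sum_congr rfl fun s _ => Finset.sum_congr rfl fun t _ => by ring
  simp_rw [hexpand]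
  rw [integral_finsetSum _ fun s _ => integrable_finsetSum _ fun t _ =>
    (integrable_chi_mul_chi hZ s t).const_mul _]
  refine Finset.sum_congr rfl fun s hs => ?_
  rw [integral_finsetSum _ fun t _ => (integrable_chi_mul_chi hZ s t).const_mul _]
  simp_rw [integral_const_mul, integral_chi_mul_chi hind hZ hq]
  simp [hs, sq]

end Chi

lemma sum_range_choose_le_exp_mul_div_pow {b d : ℕ} (hbd : b ≤ d) :
    ∑ k ∈ range (b + 1), (d.choose k : ℝ) ≤ (Real.exp 1 * d / b) ^ b := by
  rcases b.eq_zero_or_pos with rfl | hb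
  · simp
  have hb' : (0 : ℝ) < b := by exact_mod_cast hb
  have hd : (0 : ℝ) < d := by exact_mod_cast hb.trans_le hbd
  -- Weight the `k`-th term by `r ^ k` with `r = b / d ≤ 1` and compare with `(1 + r) ^ d ≤ e ^ b`.
  set r : ℝ := b / d with hr
  have hr0 : 0 < r := div_pos hb' hd
  have hr1 : r ≤ 1 := (div_le_one hd).2 (by exact_mod_cast hbd)
  have hweighted : (∑ k ∈ range (b + 1), (d.choose k : ℝ)) * r ^ b ≤ Real.exp 1 ^ b :=
    calc (∑ k ∈ range (b + 1), (d.choose k : ℝ)) * r ^ b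
        ≤ ∑ k ∈ range (b + 1), (d.choose k : ℝ) * r ^ k := by
          rw [sum_mul]
          exact sum_le_sum fun k hk => mul_le_mul_of_nonneg_left
            (pow_le_pow_of_le_one hr0.le hr1 (Nat.lt_succ_iff.1 (mem_range.1 hk))) (by positivity)
      _ ≤ ∑ k ∈ range (d + 1), (d.choose k : ℝ) * r ^ k :=
          sum_le_sum_of_subset_of_nonneg (range_subset_range.2 (by omega))
            fun k _ _ => by positivity
      _ = (1 + r) ^ d := by
          rw [add_comm 1 r, add_pow]
          simp [mul_comm]
      _ ≤ Real.exp r ^ d := by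
          gcongr
          linarith [Real.add_one_le_exp r]
      _ = Real.exp 1 ^ b := by
          rw [← Real.exp_nat_mul, ← Real.exp_nat_mul, hr]
          field_simp
  rw [show Real.exp 1 * d / b = Real.exp 1 / r by rw [hr]; field_simp, div_pow,
    le_div_iff₀ (pow_pos hr0 b)]
  exact hweighted

section Bounds

variable {n β : ℕ} {Nb : Fin n → Finset (Fin n)} {q : Fin n → ℝ} {i : Fin n}

@[simp]
lemma gcoef_empty (q : Fin n → ℝ) : gcoef q ∅ = 0 := by
  simp [gcoef]

@[simp]
lemma gcoef_singleton (q : Fin n → ℝ) (j : Fin n) : gcoef q {j} = 1 := by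
  simp [gcoef]

lemma gcoef_sq_le_one (hq : ∀ j, 0 ≤ q j ∧ q j ≤ 1) (s : Finset (Fin n)) :
    gcoef q s ^ 2 ≤ 1 := by
  rcases s.eq_empty_or_nonempty with rfl | ⟨j, hj⟩
  · simp
  have hsum : (∏ k ∈ s, (1 - q k)) + ∏ k ∈ s, q k ≤ ∏ k ∈ s, (1 : ℝ) :=
    prod_add_prod_le hj (by simp) (fun k _ _ => by linarith [hq k])
      (fun k _ _ => (hq k).2) (fun k _ => by linarith [hq k]) fun k _ => (hq k).1
  have habs : |gcoef q s| ≤ 1 := by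
    calc |gcoef q s| ≤ |∏ k ∈ s, (1 - q k)| + |∏ k ∈ s, (-q k)| := abs_sub _ _
      _ = (∏ k ∈ s, (1 - q k)) + ∏ k ∈ s, q k := by
        rw [abs_of_nonneg (prod_nonneg fun k _ => by linarith [hq k]), abs_prod]
        simp_rw [abs_neg, abs_of_nonneg (hq _).1]
      _ ≤ 1 := by simpa using hsum
  exact (sq_le_one_iff_abs_le_one _).2 habs

lemma card_Sb (n β : ℕ) (Nb : Fin n → Finset (Fin n)) (i : Fin n) :
    (Sb n β Nb i).card = ∑ k ∈ range (β + 1), (Nb i).card.choose k := by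
  rw [card_eq_sum_card_fiberwise (f := Finset.card) (t := range (β + 1))
    fun s hs => by simpa [Sb, Nat.lt_succ_iff] using (mem_filter.1 hs).2]
  refine Finset.sum_congr rfl fun k hk => ?_
  rw [← card_powersetCard]
  congr 1
  ext s
  simp only [Sb, mem_filter, mem_powerset, mem_powersetCard, mem_range] at hk ⊢
  constructor
  · rintro ⟨⟨hs, -⟩, rfl⟩
    exact ⟨hs, rfl⟩
  · rintro ⟨hs, rfl⟩
    exact ⟨⟨hs, by omega⟩, rfl⟩

lemma four_le_sum_gcoef_sq_mul_prod (hβ : 1 ≤ β) (hi : i ∈ Nb i)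
    (hq : ∀ j, 0 < q j ∧ q j < 1) :
    4 ≤ ∑ s ∈ Sb n β Nb i, gcoef q s ^ 2 * ∏ j ∈ s, (q j * (1 - q j))⁻¹ := by
  have hmem : {i} ∈ Sb n β Nb i := by simpa [Sb] using ⟨hi, hβ⟩
  have hvar : 4 ≤ (q i * (1 - q i))⁻¹ := by
    rw [le_inv_comm₀ (by norm_num) (mul_pos (hq i).1 (sub_pos.2 (hq i).2))]
    nlinarith [sq_nonneg (q i - 1 / 2)]
  calc (4 : ℝ) ≤ gcoef q {i} ^ 2 * ∏ j ∈ {i}, (q j * (1 - q j))⁻¹ := by simpa using hvar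
    _ ≤ _ := single_le_sum (f := fun s => gcoef q s ^ 2 * ∏ j ∈ s, (q j * (1 - q j))⁻¹)
        (fun s _ => mul_nonneg (sq_nonneg _) (prod_nonneg fun j _ =>
        inv_nonneg.2 (mul_pos (hq j).1 (sub_pos.2 (hq j).2)).le)) hmem

lemma sum_gcoef_sq_mul_prod_le {p : ℝ} {din : ℕ} (hp : 0 < p)
    (hq : ∀ j, p ≤ q j ∧ q j ≤ 1 - p) (hdin : (Nb i).card ≤ din) (hβdin : β ≤ din) :
    ∑ s ∈ Sb n β Nb i, gcoef q s ^ 2 * ∏ j ∈ s, (q j * (1 - q j))⁻¹ ≤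
      (Real.exp 1 * din / (β * (p * (1 - p)))) ^ β := by
  have hpp : 0 < p * (1 - p) := mul_pos hp (by linarith [hq i])
  have hqq : ∀ j, p * (1 - p) ≤ q j * (1 - q j) := fun j => by nlinarith [hq j]
  have hone : 1 ≤ (p * (1 - p))⁻¹ :=
    (one_le_inv₀ hpp).2 (by nlinarith [sq_nonneg (p - 1 / 2)])
  have hprod : ∀ s : Finset (Fin n),
      ∏ j ∈ s, (q j * (1 - q j))⁻¹ ≤ (p * (1 - p))⁻¹ ^ s.card := fun s =>
    prod_const ((p * (1 - p))⁻¹) ▸ prod_le_prod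
      (fun j _ => (inv_pos.2 (hpp.trans_le (hqq j))).le) fun j _ => inv_anti₀ hpp (hqq j)
  have hterm : ∀ s ∈ Sb n β Nb i,
      gcoef q s ^ 2 * ∏ j ∈ s, (q j * (1 - q j))⁻¹ ≤ (p * (1 - p))⁻¹ ^ β := fun s hs =>
    calc gcoef q s ^ 2 * ∏ j ∈ s, (q j * (1 - q j))⁻¹ ≤ 1 * (p * (1 - p))⁻¹ ^ s.card :=
          mul_le_mul (gcoef_sq_le_one (fun j => ⟨by linarith [hq j], by linarith [hq j]⟩) s)
            (hprod s) (prod_nonneg fun j _ => (inv_pos.2 (hpp.trans_le (hqq j))).le) zero_le_one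
      _ ≤ (p * (1 - p))⁻¹ ^ β := by
          rw [one_mul]
          exact pow_le_pow_right₀ hone (mem_filter.1 hs).2
  have hcard : ((Sb n β Nb i).card : ℝ) ≤ (Real.exp 1 * din / β) ^ β := by
    calc ((Sb n β Nb i).card : ℝ) ≤ ∑ k ∈ range (β + 1), (din.choose k : ℝ) := by
          rw [card_Sb]
          push_cast
          exact sum_le_sum fun k _ => by exact_mod_cast Nat.choose_le_choose k hdin
      _ ≤ _ := sum_range_choose_le_exp_mul_div_pow hβdin
  calc _ ≤ ∑ s ∈ Sb n β Nb i, (p * (1 - p))⁻¹ ^ β := sum_le_sum hterm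
    _ = (Sb n β Nb i).card * (p * (1 - p))⁻¹ ^ β := by rw [sum_const, nsmul_eq_mul]
    _ ≤ (Real.exp 1 * din / β) ^ β * (p * (1 - p))⁻¹ ^ β := by gcongr
    _ = _ := by rw [← mul_pow, ← div_eq_mul_inv, div_div]

end Bounds

namespace Setting

variable {β dX : ℕ} {p : ℝ} (St : Setting β dX p)

lemma isBernoulli (j : Fin St.n) : IsBernoulli (St.Z j) St.μ (St.prob j) :=
  ⟨St.Z_meas j, St.Z_range j, St.Z_prob j⟩

lemma prob_pos_lt_one (hp : 0 < p) (j : Fin St.n) : 0 < St.prob j ∧ St.prob j < 1 :=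
  ⟨by linarith [St.prob_mem j], by linarith [St.prob_mem j]⟩

lemma w_eq_sum_chi (i : Fin St.n) (x : St.Ω) :
    St.w i x = ∑ s ∈ Sb St.n β St.Nb i, gcoef St.prob s * chi St.prob s (St.Z · x) :=
  rfl

lemma E_w_eq_zero (hp : 0 < p) (i : Fin St.n) : St.E (St.w i) = 0 := by
  have := St.isProb
  simp only [E, w_eq_sum_chi]
  rw [integral_sum_chi St.Z_indep St.isBernoulli (St.prob_pos_lt_one hp)]
  simp

lemma E_w_sq_eq_sum (hp : 0 < p) (i : Fin St.n) :
    St.E (fun x => St.w i x ^ 2) =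
      ∑ s ∈ Sb St.n β St.Nb i, gcoef St.prob s ^ 2 * ∏ j ∈ s, (St.prob j * (1 - St.prob j))⁻¹ := by
  have := St.isProb
  simp only [E, w_eq_sum_chi]
  exact integral_sum_chi_sq St.Z_indep St.isBernoulli (St.prob_pos_lt_one hp) _ _

end Setting

end SNIPE

theorem statement_2_general (β dX : ℕ) (hβ : 1 ≤ β) (p : ℝ) (hp : 0 < p)
    (St : SNIPE.Setting β dX p)
    (din : ℕ) (hdin : ∀ i, (St.Nb i).card ≤ din) (hβdin : β ≤ din)
    (i : Fin St.n) :
    St.E (St.w i) = 0 ∧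
    St.E (fun x => St.w i x ^ 2) =
      ∑ s ∈ SNIPE.Sb St.n β St.Nb i,
        SNIPE.gcoef St.prob s ^ 2 * ∏ j ∈ s, (St.prob j * (1 - St.prob j))⁻¹ ∧
    4 ≤ St.E (fun x => St.w i x ^ 2) ∧
    St.E (fun x => St.w i x ^ 2) ≤
      (Real.exp 1 * din / (β * (p * (1 - p)))) ^ β := by
  rw [St.E_w_sq_eq_sum hp i]
  exact ⟨St.E_w_eq_zero hp i, rfl,
    four_le_sum_gcoef_sq_mul_prod hβ (St.self_mem i) (St.prob_pos_lt_one hp),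
    sum_gcoef_sq_mul_prod_le hp St.prob_mem (hdin i) hβdin⟩

/-- `E[ω_i] = 0`, `E[ω_i²] = ∑_(S∈S_i^β) g(S)² ∏_(j∈S) 1/(p_j(1-p_j))`, and
`4 ≤ E[ω_i²] ≤ (e d_in/(β p(1-p)))^β`. -/
theorem statement_2 (β dX : ℕ) (hβ : 1 ≤ β) (p : ℝ) (hp : 0 < p) (hp' : p ≤ 1 / 2)
    (St : SNIPE.Setting β dX p)
    (din : ℕ) (hdin : ∀ i, (St.Nb i).card ≤ din) (hβdin : β ≤ din)
    (i : Fin St.n) :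
    St.E (St.w i) = 0 ∧
    St.E (fun x => St.w i x ^ 2) =
      ∑ s ∈ SNIPE.Sb St.n β St.Nb i,
        SNIPE.gcoef St.prob s ^ 2 * ∏ j ∈ s, (St.prob j * (1 - St.prob j))⁻¹ ∧
    4 ≤ St.E (fun x => St.w i x ^ 2) ∧
    St.E (fun x => St.w i x ^ 2) ≤
      (Real.exp 1 * din / (β * (p * (1 - p)))) ^ β :=
  statement_2_general β dX hβ p hp St din hdin hβdin i
end
end

section
/- For any fixed θ ∈ R^{d_X}, the covariate-adjusted SNIPE estimator is unbiased, E[TTÊ(θ)] = TTE, and its variance satisfies Var(TTÊ(θ)) ≤ (4 d_in d_out (Y_max + ‖θ‖₂ X_max)² / n) · ((e d_in / β) · max{4β², 1/(p(1−p))})^β. -/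
noncomputable section

open MeasureTheory ProbabilityTheory Filter Finset Topology SNIPE

/-!
Every unit's term `ω_i (Y_i - θᵀX_i)` is a polynomial in the independent Bernoulli treatments,
so its moments factor over coordinates: `E[∏_{j∈S} (Z_j - p_j)/(p_j(1-p_j)) ∏_{j∈T} Z_j]` is
`∏_{j∈T∖S} p_j` if `S ⊆ T` and `0` otherwise. Summing against `g(S)` gives
`E[ω_i ∏_{j∈T} Z_j] = 1 - [T = ∅]`; hence `E[ω_i] = 0`, the covariate shift `θᵀX_i` costs no
bias, and `E[ω_i Y_i] = Y_i(1) - Y_i(0)`.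

For the variance, units with disjoint in-neighbourhoods have independent terms, each unit meets
at most `d_in d_out` in-neighbourhoods, and every remaining covariance is bounded by the common
variance bound `(Y_max + ‖θ‖₂ X_max)² E[ω_i²]`. Finally
`E[ω_i²] = ∑_S g(S)² ∏_{j∈S} 1/(p_j(1-p_j)) ≤ 4 ∑_{|S| ≤ β} r^{|S|}` with `r = 1/(p(1-p))`, and
`∑_{S ⊆ N, |S| ≤ β} r^{|S|} ≤ l^{-β} (1 + l r)^{|N|}` for `0 < l ≤ 1`, evaluated at
`l = β/(d_in M)` with `M = max(4β², r)`, yields the stated power.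
-/

theorem Finset.prod_mul_prod_eq_prod_union {ι M : Type*} [CommMonoid M] [DecidableEq ι]
    (s t : Finset ι) (f g : ι → M) :
    (∏ j ∈ s, f j) * ∏ j ∈ t, g j =
      ∏ j ∈ s ∪ t, (if j ∈ s then f j else 1) * (if j ∈ t then g j else 1) := by
  rw [prod_mul_distrib, prod_ite_mem, prod_ite_mem, union_inter_cancel_left,
    union_inter_cancel_right]

theorem sum_pow_card_le_inv_pow_mul {ι : Type*} (N : Finset ι) (β : ℕ) {r l : ℝ} (hr : 0 ≤ r)
    (hl0 : 0 < l) (hl1 : l ≤ 1) :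
    ∑ s ∈ N.powerset.filter (·.card ≤ β), r ^ s.card ≤ l⁻¹ ^ β * (l * r + 1) ^ N.card := by
  calc ∑ s ∈ N.powerset.filter (·.card ≤ β), r ^ s.card
      ≤ ∑ s ∈ N.powerset.filter (·.card ≤ β), l⁻¹ ^ β * (l * r) ^ s.card := by
        refine sum_le_sum fun s hs => ?_
        have hk : s.card ≤ β := (mem_filter.1 hs).2
        have hlk : 1 ≤ l⁻¹ ^ β * l ^ s.card :=
          calc 1 = l⁻¹ ^ s.card * l ^ s.card := by rw [inv_pow, inv_mul_cancel₀ (by positivity)]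
            _ ≤ l⁻¹ ^ β * l ^ s.card := by gcongr; exact (one_le_inv₀ hl0).2 hl1
        rw [mul_pow, ← mul_assoc]
        exact le_mul_of_one_le_left (by positivity) hlk
    _ ≤ ∑ s ∈ N.powerset, l⁻¹ ^ β * (l * r) ^ s.card :=
        sum_le_sum_of_subset_of_nonneg (filter_subset _ _) fun _ _ _ => by positivity
    _ = l⁻¹ ^ β * (l * r + 1) ^ N.card := by
        rw [← mul_sum, ← sum_pow_mul_eq_add_pow]
        simp

theorem sum_pow_card_le_exp {ι : Type*} (N : Finset ι) {β d : ℕ} {r M : ℝ} (hβ : 0 < β)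
    (hd : N.card ≤ d) (hr : 0 ≤ r) (hrM : r ≤ M) (hβM : (β : ℝ) ≤ d * M) :
    ∑ s ∈ N.powerset.filter (·.card ≤ β), r ^ s.card ≤ (Real.exp 1 * d / β * M) ^ β := by
  have hβ0 : (0 : ℝ) < β := Nat.cast_pos.2 hβ
  have hdM : 0 < (d : ℝ) * M := hβ0.trans_le hβM
  have hM : 0 < M := pos_of_mul_pos_right hdM (Nat.cast_nonneg d)
  have hd0 : (0 : ℝ) < d := pos_of_mul_pos_left hdM hM.le
  set l : ℝ := β / (d * M)
  have hl0 : 0 < l := div_pos hβ0 hdM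
  have hl1 : l ≤ 1 := (div_le_one hdM).2 hβM
  have hexp : (l * r + 1) ^ N.card ≤ Real.exp 1 ^ β :=
    calc (l * r + 1) ^ N.card ≤ (l * r + 1) ^ d :=
          pow_le_pow_right₀ (by nlinarith) hd
      _ ≤ Real.exp (l * r) ^ d := by gcongr; exact Real.add_one_le_exp _
      _ = Real.exp (β * (r / M)) := by
          rw [← Real.exp_nat_mul]; congr 1; simp only [l]; field_simp
      _ ≤ Real.exp β := by
          gcongr; exact mul_le_of_le_one_right hβ0.le ((div_le_one hM).2 hrM)
      _ = Real.exp 1 ^ β := by rw [← Real.exp_nat_mul, mul_one]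
  calc ∑ s ∈ N.powerset.filter (·.card ≤ β), r ^ s.card
      ≤ l⁻¹ ^ β * (l * r + 1) ^ N.card := sum_pow_card_le_inv_pow_mul N β hr hl0 hl1
    _ ≤ l⁻¹ ^ β * Real.exp 1 ^ β := by gcongr
    _ = (Real.exp 1 * d / β * M) ^ β := by
        rw [← mul_pow]; congr 1; simp only [l]; field_simp

theorem ProbabilityTheory.iIndepFun.indepFun_comp_of_dependsOn {Ω ι 𝓧 : Type*}
    [MeasurableSpace Ω] [MeasurableSpace 𝓧] [Inhabited 𝓧] {μ : Measure Ω} {Z : ι → Ω → 𝓧}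
    (hZ : iIndepFun Z μ) (hZm : ∀ j, Measurable (Z j)) {S T : Finset ι} (hST : Disjoint S T)
    {F G : (ι → 𝓧) → ℝ} (hF : Measurable F) (hG : Measurable G)
    (hFS : DependsOn F S) (hGT : DependsOn G T) :
    IndepFun (fun x => F (Z · x)) (fun x => G (Z · x)) μ := by
  classical
  let extend (U : Finset ι) (y : U → 𝓧) (j : ι) : 𝓧 := if h : j ∈ U then y ⟨j, h⟩ else default
  have hext (U : Finset ι) : Measurable (extend U) :=
    measurable_pi_lambda _ fun j => by
      by_cases h : j ∈ U
      · simpa [extend, h] using measurable_pi_apply (⟨j, h⟩ : U)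
      · simp [extend, h]
  have hF' : (fun x => F (Z · x)) = (F ∘ extend S) ∘ fun x (j : S) => Z j x :=
    funext fun x => hFS fun j hj => by simp [extend, mem_coe.1 hj]
  have hG' : (fun x => G (Z · x)) = (G ∘ extend T) ∘ fun x (j : T) => Z j x :=
    funext fun x => hGT fun j hj => by simp [extend, mem_coe.1 hj]
  rw [hF', hG']
  exact (hZ.indepFun_finset S T hST hZm).comp (hF.comp (hext S)) (hG.comp (hext T))

theorem ProbabilityTheory.two_mul_covariance_le_variance_add_variance {Ω : Type*}
    [MeasurableSpace Ω] {μ : Measure Ω} [IsFiniteMeasure μ] {X Y : Ω → ℝ} (hX : MemLp X 2 μ)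
    (hY : MemLp Y 2 μ) : 2 * cov[X, Y; μ] ≤ Var[X; μ] + Var[Y; μ] := by
  have := variance_sub hX hY
  linarith [variance_nonneg (X - Y) μ]

theorem MeasureTheory.memLp_of_forall_mem_finite {Ω : Type*} [MeasurableSpace Ω]
    {μ : Measure Ω} [IsFiniteMeasure μ] {f : Ω → ℝ} (hf : AEStronglyMeasurable f μ)
    {C : Set ℝ} (hC : C.Finite) (hfC : ∀ x, f x ∈ C) (q : ENNReal) : MemLp f q μ := by
  obtain ⟨M, hM⟩ := (hC.image (‖·‖)).bddAbove
  exact MemLp.of_bound hf M (ae_of_all _ fun x => hM ⟨f x, hfC x, rfl⟩)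

namespace SNIPE

variable {n β : ℕ} {Nb : Fin n → Finset (Fin n)} {i : Fin n}

lemma subset_of_mem_Sb {s : Finset (Fin n)} (hs : s ∈ Sb n β Nb i) : s ⊆ Nb i :=
  mem_powerset.1 (mem_filter.1 hs).1

lemma empty_mem_Sb : ∅ ∈ Sb n β Nb i := by simp [Sb]

lemma filter_subset_Sb {t : Finset (Fin n)} (ht : t ∈ Sb n β Nb i) :
    (Sb n β Nb i).filter (· ⊆ t) = t.powerset := by
  ext s
  simp only [mem_filter, mem_powerset, and_iff_right_iff_imp]
  intro hst
  exact mem_filter.2 ⟨mem_powerset.2 (hst.trans (subset_of_mem_Sb ht)),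
    (card_le_card hst).trans (mem_filter.1 ht).2⟩

-- The right side is `1 - [t = ∅]`, in the shape of `Ypot` at the all-ones and all-zeros
-- assignments.
lemma sum_gcoef_mul_prod_sdiff (prob : Fin n → ℝ) (t : Finset (Fin n)) :
    ∑ s ∈ t.powerset, gcoef prob s * ∏ j ∈ t \ s, prob j =
      (∏ _j ∈ t, (1 : ℝ)) - ∏ _j ∈ t, (0 : ℝ) := by
  simp only [gcoef, sub_mul, sum_sub_distrib, ← prod_add]
  congr 1 <;> exact prod_congr rfl fun j _ => by ring

@[fun_prop]
lemma measurable_wt (prob : Fin n → ℝ) : Measurable (wt n β Nb prob i) := by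
  unfold wt; fun_prop

@[fun_prop]
lemma measurable_Ypot (α : Fin n → Finset (Fin n) → ℝ) : Measurable (Ypot n β Nb α i) := by
  unfold Ypot; fun_prop

lemma dependsOn_wt (prob : Fin n → ℝ) : DependsOn (wt n β Nb prob i) (Nb i) :=
  fun _ _ h => sum_congr rfl fun _ hs => congrArg _ <| prod_congr rfl fun j hj => by
    rw [h j (subset_of_mem_Sb hs hj)]

lemma dependsOn_Ypot (α : Fin n → Finset (Fin n) → ℝ) : DependsOn (Ypot n β Nb α i) (Nb i) :=
  fun _ _ h => sum_congr rfl fun _ hs => congrArg _ <| prod_congr rfl fun j hj =>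
    h j (subset_of_mem_Sb hs hj)

lemma abs_sum_mul_le_l2_mul {d : ℕ} (θ v : Fin d → ℝ) :
    |∑ k, θ k * v k| ≤ l2 θ * ∑ k, |v k| := by
  have hθ (k : Fin d) : |θ k| ≤ l2 θ := by
    rw [l2, ← Real.sqrt_sq_eq_abs]
    exact Real.sqrt_le_sqrt (single_le_sum (fun k _ => sq_nonneg (θ k)) (mem_univ k))
  rw [mul_sum]
  refine (abs_sum_le_sum_abs _ _).trans (sum_le_sum fun k _ => ?_)
  rw [abs_mul]
  exact mul_le_mul_of_nonneg_right (hθ k) (abs_nonneg _)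

end SNIPE

namespace SNIPE.Setting

variable {β dX : ℕ} {p : ℝ} (St : Setting β dX p)

instance : IsProbabilityMeasure St.μ := St.isProb

def bernMean (j : Fin St.n) (f : ℝ → ℝ) : ℝ := (1 - St.prob j) * f 0 + St.prob j * f 1

def centered (j : Fin St.n) (z : ℝ) : ℝ := (z - St.prob j) / (St.prob j * (1 - St.prob j))

@[fun_prop]
lemma measurable_centered (j : Fin St.n) : Measurable (St.centered j) := by
  unfold centered; fun_prop

lemma prob_pos (hp : 0 < p) (j : Fin St.n) : 0 < St.prob j :=
  hp.trans_le (St.prob_mem j).1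

lemma one_sub_prob_pos (hp : 0 < p) (j : Fin St.n) : 0 < 1 - St.prob j := by
  linarith [St.prob_mem j]

lemma prob_mul_one_sub_pos (hp : 0 < p) (j : Fin St.n) : 0 < St.prob j * (1 - St.prob j) :=
  mul_pos (St.prob_pos hp j) (St.one_sub_prob_pos hp j)

lemma apply_Z_eq (f : ℝ → ℝ) (j : Fin St.n) (x : St.Ω) :
    f (St.Z j x) = f 0 + (f 1 - f 0) * St.Z j x := by
  rcases St.Z_range j x with h | h <;> simp [h]

lemma measurable_Zvec : Measurable fun x => (St.Z · x) := measurable_pi_lambda _ St.Z_meas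

lemma memLp_comp_Z {F : (Fin St.n → ℝ) → ℝ} (hF : Measurable F) (q : ENNReal) :
    MemLp (fun x => F (St.Z · x)) q St.μ := by
  refine memLp_of_forall_mem_finite (hF.comp St.measurable_Zvec).aestronglyMeasurable
    ((Set.Finite.pi fun _ => (Set.toFinite {0, 1})).image F) (fun x => ⟨_, ?_, rfl⟩) q
  exact Set.mem_univ_pi.2 fun j => by rcases St.Z_range j x with h | h <;> simp [h]

lemma integrable_comp_Z {F : (Fin St.n → ℝ) → ℝ} (hF : Measurable F) :
    Integrable (fun x => F (St.Z · x)) St.μ :=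
  memLp_one_iff_integrable.1 (St.memLp_comp_Z hF 1)

lemma integral_Z (hp : 0 ≤ p) (j : Fin St.n) : ∫ x, St.Z j x ∂St.μ = St.prob j := by
  have hZ : St.Z j = (St.Z j ⁻¹' {1}).indicator 1 := by
    funext x
    rcases St.Z_range j x with h | h <;> simp [h]
  rw [hZ, integral_indicator_one ((St.Z_meas j) (measurableSet_singleton 1)), measureReal_def,
    St.Z_prob j, ENNReal.toReal_ofReal (hp.trans (St.prob_mem j).1)]

lemma integral_comp_Z (hp : 0 ≤ p) (f : ℝ → ℝ) (j : Fin St.n) :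
    ∫ x, f (St.Z j x) ∂St.μ = St.bernMean j f := by
  simp_rw [St.apply_Z_eq f j]
  rw [integral_add (integrable_const _) ((St.integrable_comp_Z (F := fun z => z j)
      (measurable_pi_apply j)).const_mul _), integral_const_mul,
    St.integral_Z hp, integral_const, probReal_univ, bernMean]
  simp only [one_smul]; ring

lemma integral_prod_comp_Z (hp : 0 ≤ p) (f : Fin St.n → ℝ → ℝ) (U : Finset (Fin St.n)) :
    ∫ x, ∏ j ∈ U, f j (St.Z j x) ∂St.μ = ∏ j ∈ U, St.bernMean j (f j) := by
  classical
  -- the affine interpolant of `f j` agrees with it on `{0, 1}` and is measurable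
  let g (j : Fin St.n) (z : ℝ) : ℝ := if j ∈ U then f j 0 + (f j 1 - f j 0) * z else 1
  have hg : ∀ x, ∏ j ∈ U, f j (St.Z j x) = ∏ j, g j (St.Z j x) := fun x => by
    rw [← Fintype.prod_ite_mem U]
    exact prod_congr rfl fun j _ => by simp only [g]; split_ifs <;> simp [St.apply_Z_eq (f j)]
  simp_rw [hg]
  rw [St.Z_indep.integral_fun_prod_comp (fun j => (St.Z_meas j).aemeasurable)
    (fun j => (by simp only [g]; split_ifs <;> fun_prop : Measurable (g j)).aestronglyMeasurable),
    ← Fintype.prod_ite_mem U]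
  refine prod_congr rfl fun j _ => ?_
  rw [St.integral_comp_Z hp]
  simp only [g, bernMean]; split_ifs <;> ring

lemma integral_prod_mul_prod_comp_Z (hp : 0 ≤ p) {f : Fin St.n → ℝ → ℝ}
    (hf : ∀ j, St.bernMean j (f j) = 0) (g : Fin St.n → ℝ → ℝ) (s t : Finset (Fin St.n)) :
    ∫ x, (∏ j ∈ s, f j (St.Z j x)) * ∏ j ∈ t, g j (St.Z j x) ∂St.μ =
      if s ⊆ t then
        (∏ j ∈ s, St.bernMean j (fun z => f j z * g j z)) * ∏ j ∈ t \ s, St.bernMean j (g j)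
      else 0 := by
  classical
  -- a coordinate of `s \ t` contributes the factor `E[f j (Z j)] = 0`
  conv_lhs => enter [2, x]; rw [prod_mul_prod_eq_prod_union]
  refine (St.integral_prod_comp_Z hp
    (fun j z => (if j ∈ s then f j z else 1) * (if j ∈ t then g j z else 1)) (s ∪ t)).trans ?_
  split_ifs with hst
  · rw [union_eq_right.2 hst, ← prod_sdiff hst, mul_comm]
    refine congrArg₂ (· * ·) (prod_congr rfl fun j hj => ?_) (prod_congr rfl fun j hj => ?_)
    · simp [hst hj, hj]
    · simp [(mem_sdiff.1 hj).1, (mem_sdiff.1 hj).2]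
  · obtain ⟨j, hjs, hjt⟩ := not_subset.1 hst
    exact prod_eq_zero (mem_union_left t hjs) (by simpa [hjs, hjt] using hf j)

lemma bernMean_centered (hp : 0 < p) (j : Fin St.n) : St.bernMean j (St.centered j) = 0 := by
  have := (St.prob_pos hp j).ne'
  have := (St.one_sub_prob_pos hp j).ne'
  simp only [bernMean, centered]
  field_simp
  ring

lemma integral_prod_centered_mul_prod_Z (hp : 0 < p) (s t : Finset (Fin St.n)) :
    ∫ x, (∏ j ∈ s, St.centered j (St.Z j x)) * ∏ j ∈ t, St.Z j x ∂St.μ =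
      if s ⊆ t then ∏ j ∈ t \ s, St.prob j else 0 := by
  refine (St.integral_prod_mul_prod_comp_Z hp.le (St.bernMean_centered hp)
    (fun _ z => z) s t).trans ?_
  have hmean (j : Fin St.n) : St.bernMean j (fun z => St.centered j z * z) = 1 := by
    have := (St.prob_pos hp j).ne'
    have := (St.one_sub_prob_pos hp j).ne'
    simp only [bernMean, centered]
    field_simp
    ring
  simp only [hmean]
  simp [bernMean]

lemma integral_prod_centered_mul_prod_centered (hp : 0 < p) (s t : Finset (Fin St.n)) :
    ∫ x, (∏ j ∈ s, St.centered j (St.Z j x)) * ∏ j ∈ t, St.centered j (St.Z j x) ∂St.μ =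
      if s = t then ∏ j ∈ s, (St.prob j * (1 - St.prob j))⁻¹ else 0 := by
  refine (St.integral_prod_mul_prod_comp_Z hp.le (St.bernMean_centered hp) _ s t).trans ?_
  have hmean (j : Fin St.n) : St.bernMean j (fun z => St.centered j z * St.centered j z) =
      (St.prob j * (1 - St.prob j))⁻¹ := by
    have := (St.prob_pos hp j).ne'
    have := (St.one_sub_prob_pos hp j).ne'
    simp only [bernMean, centered]
    field_simp
    ring
  simp only [hmean, St.bernMean_centered hp]
  by_cases hst : s = t
  · simp [hst]
  · rw [if_neg hst]
    split_ifs with hsub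
    · obtain ⟨j, hj⟩ := sdiff_nonempty.2 fun h => hst (hsub.antisymm h)
      exact mul_eq_zero_of_right _ (prod_eq_zero hj rfl)
    · rfl

lemma w_eq (i : Fin St.n) (x : St.Ω) :
    St.w i x = ∑ s ∈ Sb St.n β St.Nb i, gcoef St.prob s * ∏ j ∈ s, St.centered j (St.Z j x) :=
  rfl

lemma integral_w_mul_prod_Z (hp : 0 < p) {i : Fin St.n} {t : Finset (Fin St.n)}
    (ht : t ∈ Sb St.n β St.Nb i) :
    ∫ x, St.w i x * ∏ j ∈ t, St.Z j x ∂St.μ = (∏ _j ∈ t, (1 : ℝ)) - ∏ _j ∈ t, (0 : ℝ) := by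
  simp_rw [w_eq, sum_mul, mul_assoc]
  rw [integral_finsetSum _ fun s _ => (St.integrable_comp_Z
    (F := fun z => (∏ j ∈ s, St.centered j (z j)) * ∏ j ∈ t, z j) (by fun_prop)).const_mul _]
  simp_rw [integral_const_mul, St.integral_prod_centered_mul_prod_Z hp, mul_ite, mul_zero]
  rw [← sum_filter, filter_subset_Sb ht, sum_gcoef_mul_prod_sdiff]

lemma integral_w (hp : 0 < p) (i : Fin St.n) : ∫ x, St.w i x ∂St.μ = 0 := by
  simpa using St.integral_w_mul_prod_Z hp (empty_mem_Sb (i := i))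

lemma integral_w_mul_Yo (hp : 0 < p) (i : Fin St.n) :
    ∫ x, St.w i x * St.Yo i x ∂St.μ =
      Ypot St.n β St.Nb St.α i (fun _ => 1) - Ypot St.n β St.Nb St.α i (fun _ => 0) := by
  simp_rw [Yo, Ypot, mul_sum, mul_left_comm (St.w i _)]
  rw [integral_finsetSum]
  · simp_rw [integral_const_mul, ← sum_sub_distrib, ← mul_sub]
    exact sum_congr rfl fun t ht => by rw [St.integral_w_mul_prod_Z hp ht]
  · exact fun t _ => (St.integrable_comp_Z
      (F := fun z => wt St.n β St.Nb St.prob i z * ∏ j ∈ t, z j) (by fun_prop)).const_mul _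

def summand (θ : Fin dX → ℝ) (i : Fin St.n) (z : Fin St.n → ℝ) : ℝ :=
  wt St.n β St.Nb St.prob i z * (Ypot St.n β St.Nb St.α i z - ∑ k, θ k * St.X i k)

lemma tteHat_eq (θ : Fin dX → ℝ) :
    St.tteHat θ = fun x => (St.n : ℝ)⁻¹ * ∑ i, St.summand θ i (St.Z · x) :=
  rfl

@[fun_prop]
lemma measurable_summand (θ : Fin dX → ℝ) (i : Fin St.n) : Measurable (St.summand θ i) := by
  unfold summand; fun_prop

lemma dependsOn_summand (θ : Fin dX → ℝ) (i : Fin St.n) :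
    DependsOn (St.summand θ i) (St.Nb i) := fun _ _ h => by
  simp only [summand, dependsOn_wt _ h, dependsOn_Ypot _ h]

lemma integral_summand (hp : 0 < p) (θ : Fin dX → ℝ) (i : Fin St.n) :
    ∫ x, St.summand θ i (St.Z · x) ∂St.μ =
      Ypot St.n β St.Nb St.α i (fun _ => 1) - Ypot St.n β St.Nb St.α i (fun _ => 0) := by
  have hw : Integrable (St.w i) St.μ := St.integrable_comp_Z (measurable_wt St.prob)
  have hwY : Integrable (fun x => St.w i x * St.Yo i x) St.μ :=
    St.integrable_comp_Z (F := fun z => wt St.n β St.Nb St.prob i z * Ypot St.n β St.Nb St.α i z)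
      (by fun_prop)
  have h (x : St.Ω) : St.summand θ i (St.Z · x) =
      St.w i x * St.Yo i x - St.w i x * ∑ k, θ k * St.X i k := mul_sub _ _ _
  simp_rw [h]
  rw [integral_sub hwY (hw.mul_const _), integral_mul_const, St.integral_w_mul_Yo hp,
    St.integral_w hp]
  ring

theorem integral_tteHat (hp : 0 < p) (θ : Fin dX → ℝ) : St.E (St.tteHat θ) = St.tte := by
  rw [E, tteHat_eq, integral_const_mul, integral_finsetSum _ fun i _ =>
    St.integrable_comp_Z (St.measurable_summand θ i)]
  simp_rw [St.integral_summand hp]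
  rfl

lemma integral_w_sq (hp : 0 < p) (i : Fin St.n) :
    ∫ x, St.w i x ^ 2 ∂St.μ =
      ∑ s ∈ Sb St.n β St.Nb i, gcoef St.prob s ^ 2 * ∏ j ∈ s, (St.prob j * (1 - St.prob j))⁻¹ := by
  have hint (s s' : Finset (Fin St.n)) := St.integrable_comp_Z (F := fun z =>
    gcoef St.prob s * gcoef St.prob s' *
      ((∏ j ∈ s, St.centered j (z j)) * ∏ j ∈ s', St.centered j (z j))) (by fun_prop)
  simp_rw [sq, w_eq, sum_mul_sum, mul_mul_mul_comm]
  rw [integral_finsetSum _ fun s _ => integrable_finsetSum _ fun s' _ => hint s s']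
  refine sum_congr rfl fun s hs => ?_
  rw [integral_finsetSum _ fun s' _ => hint s s']
  simp_rw [integral_const_mul, St.integral_prod_centered_mul_prod_centered hp, mul_ite, mul_zero,
    sum_ite_eq, if_pos hs]

lemma abs_gcoef_le (hp : 0 ≤ p) (s : Finset (Fin St.n)) : |gcoef St.prob s| ≤ 2 := by
  have h0 (j : Fin St.n) : 0 ≤ St.prob j := hp.trans (St.prob_mem j).1
  have h1 (j : Fin St.n) : St.prob j ≤ 1 := by linarith [St.prob_mem j]
  have hprod (f : Fin St.n → ℝ) (hf : ∀ j, |f j| ≤ 1) : |∏ j ∈ s, f j| ≤ 1 := by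
    rw [abs_prod]; exact prod_le_one (fun _ _ => abs_nonneg _) fun j _ => hf j
  calc |gcoef St.prob s| ≤ |∏ j ∈ s, (1 - St.prob j)| + |∏ j ∈ s, (-St.prob j)| := abs_sub _ _
    _ ≤ 1 + 1 := by
        gcongr <;> refine hprod _ fun j => abs_le.2 ⟨?_, ?_⟩ <;> linarith [h0 j, h1 j]
    _ = 2 := by norm_num

lemma inv_prob_mul_one_sub_le (hp : 0 < p) (j : Fin St.n) :
    (St.prob j * (1 - St.prob j))⁻¹ ≤ 1 / (p * (1 - p)) := by
  obtain ⟨hpj, hpj'⟩ := St.prob_mem j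
  rw [one_div]
  exact inv_anti₀ (mul_pos hp (by linarith)) (by nlinarith)

lemma integral_w_sq_le (hp : 0 < p) (hβ : 1 ≤ β) {i : Fin St.n} {din : ℕ}
    (hdin : (St.Nb i).card ≤ din) :
    ∫ x, St.w i x ^ 2 ∂St.μ ≤
      4 * (Real.exp 1 * din / β * max (4 * (β : ℝ) ^ 2) (1 / (p * (1 - p)))) ^ β := by
  set r := 1 / (p * (1 - p))
  have hr : 0 ≤ r := (inv_pos.2 (St.prob_mul_one_sub_pos hp i)).le.trans
    (St.inv_prob_mul_one_sub_le hp i)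
  have hdin1 : (1 : ℝ) ≤ din := by
    exact_mod_cast (card_pos.2 ⟨i, St.self_mem i⟩).trans_le hdin
  have hβM : (β : ℝ) ≤ din * max (4 * (β : ℝ) ^ 2) r := by
    have : (β : ℝ) ≤ 4 * (β : ℝ) ^ 2 := by
      have : (1 : ℝ) ≤ β := by exact_mod_cast hβ
      nlinarith
    nlinarith [le_max_left (4 * (β : ℝ) ^ 2) r]
  have hterm (s : Finset (Fin St.n)) :
      gcoef St.prob s ^ 2 * ∏ j ∈ s, (St.prob j * (1 - St.prob j))⁻¹ ≤ 4 * r ^ s.card := by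
    have hg : gcoef St.prob s ^ 2 ≤ 4 := by
      nlinarith [sq_abs (gcoef St.prob s), abs_nonneg (gcoef St.prob s),
        St.abs_gcoef_le hp.le s]
    have hprod : ∏ j ∈ s, (St.prob j * (1 - St.prob j))⁻¹ ≤ r ^ s.card := by
      rw [← prod_const]
      exact Finset.prod_le_prod (fun j _ => (inv_pos.2 (St.prob_mul_one_sub_pos hp j)).le)
        fun j _ => St.inv_prob_mul_one_sub_le hp j
    exact mul_le_mul hg hprod (prod_nonneg fun j _ =>
      (inv_pos.2 (St.prob_mul_one_sub_pos hp j)).le) (by norm_num)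
  calc ∫ x, St.w i x ^ 2 ∂St.μ
      = ∑ s ∈ Sb St.n β St.Nb i, gcoef St.prob s ^ 2 *
          ∏ j ∈ s, (St.prob j * (1 - St.prob j))⁻¹ := St.integral_w_sq hp i
    _ ≤ 4 * ∑ s ∈ Sb St.n β St.Nb i, r ^ s.card := by
        rw [mul_sum]; exact sum_le_sum fun s _ => hterm s
    _ ≤ _ := by
        gcongr
        exact sum_pow_card_le_exp (St.Nb i) hβ hdin hr (le_max_right _ _) hβM

lemma abs_Yo_le {Ymax : ℝ} {i : Fin St.n} (hYmax : ∑ s ∈ Sb St.n β St.Nb i, |St.α i s| ≤ Ymax)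
    (x : St.Ω) : |St.Yo i x| ≤ Ymax := by
  refine (abs_sum_le_sum_abs _ _).trans (le_trans (sum_le_sum fun s _ => ?_) hYmax)
  rw [abs_mul, abs_prod]
  refine mul_le_of_le_one_right (abs_nonneg _) (prod_le_one (fun _ _ => abs_nonneg _) fun j _ => ?_)
  rcases St.Z_range j x with h | h <;> simp [h]

lemma variance_summand_le (θ : Fin dX → ℝ) (i : Fin St.n) {A : ℝ}
    (hA : ∀ x, |St.Yo i x - ∑ k, θ k * St.X i k| ≤ A) :
    Var[fun x => St.summand θ i (St.Z · x); St.μ] ≤ A ^ 2 * ∫ x, St.w i x ^ 2 ∂St.μ := by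
  calc Var[fun x => St.summand θ i (St.Z · x); St.μ]
      ≤ ∫ x, St.summand θ i (St.Z · x) ^ 2 ∂St.μ :=
        variance_le_expectation_sq (St.memLp_comp_Z (St.measurable_summand θ i) 2).1
    _ ≤ ∫ x, A ^ 2 * St.w i x ^ 2 ∂St.μ := by
        refine integral_mono (St.memLp_comp_Z (St.measurable_summand θ i) 2).integrable_sq
          ((St.memLp_comp_Z (measurable_wt St.prob) 2).integrable_sq.const_mul _) fun x => ?_
        change (St.w i x * (St.Yo i x - ∑ k, θ k * St.X i k)) ^ 2 ≤ _
        rw [mul_pow, mul_comm]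
        exact mul_le_mul_of_nonneg_right (sq_le_sq.2 ((hA x).trans (le_abs_self A)))
          (sq_nonneg _)
    _ = A ^ 2 * ∫ x, St.w i x ^ 2 ∂St.μ := integral_const_mul _ _

lemma covariance_summand_eq_zero (θ : Fin dX → ℝ) {i i' : Fin St.n}
    (hd : Disjoint (St.Nb i) (St.Nb i')) :
    cov[fun x => St.summand θ i (St.Z · x), fun x => St.summand θ i' (St.Z · x); St.μ] = 0 :=
  (St.Z_indep.indepFun_comp_of_dependsOn St.Z_meas hd (St.measurable_summand θ i)
    (St.measurable_summand θ i') (St.dependsOn_summand θ i)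
    (St.dependsOn_summand θ i')).covariance_eq_zero
    (St.memLp_comp_Z (St.measurable_summand θ i) 2) (St.memLp_comp_Z (St.measurable_summand θ i') 2)

lemma sum_covariance_summand_le (θ : Fin dX → ℝ) (i : Fin St.n) {B : ℝ}
    (hB : ∀ i, Var[fun x => St.summand θ i (St.Z · x); St.μ] ≤ B) :
    ∑ i', cov[fun x => St.summand θ i (St.Z · x), fun x => St.summand θ i' (St.Z · x); St.μ] ≤
      (St.nbrs i).card * B := by
  calc _ ≤ ∑ i', if i' ∈ St.nbrs i then B else 0 := sum_le_sum fun i' _ => by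
        split_ifs with h
        · linarith [two_mul_covariance_le_variance_add_variance
            (St.memLp_comp_Z (St.measurable_summand θ i) 2)
            (St.memLp_comp_Z (St.measurable_summand θ i') 2), hB i, hB i']
        · refine (St.covariance_summand_eq_zero θ ?_).le
          simpa [nbrs, not_nonempty_iff_eq_empty, disjoint_iff_inter_eq_empty] using h
    _ = (St.nbrs i).card * B := by rw [sum_ite_mem, univ_inter, sum_const, nsmul_eq_mul]

lemma card_nbrs_le {dout : ℕ} (hdout : ∀ j, (univ.filter fun i => j ∈ St.Nb i).card ≤ dout)
    (i : Fin St.n) : (St.nbrs i).card ≤ (St.Nb i).card * dout := by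
  have hsub : St.nbrs i ⊆ (St.Nb i).biUnion fun j => univ.filter fun i' => j ∈ St.Nb i' := by
    intro i' hi'
    obtain ⟨j, hj⟩ := (mem_filter.1 hi').2
    exact mem_biUnion.2 ⟨j, (mem_inter.1 hj).1, mem_filter.2 ⟨mem_univ _, (mem_inter.1 hj).2⟩⟩
  calc (St.nbrs i).card ≤ _ := card_le_card hsub
    _ ≤ ∑ j ∈ St.Nb i, (univ.filter fun i' => j ∈ St.Nb i').card := card_biUnion_le
    _ ≤ (St.Nb i).card * dout := sum_le_card_nsmul _ _ _ fun j _ => hdout j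

end SNIPE.Setting

theorem statement_3_general (β dX : ℕ) (hβ : 1 ≤ β) (p : ℝ) (hp : 0 < p)
    (St : SNIPE.Setting β dX p)
    (din dout : ℕ)
    (hdin : ∀ i, (St.Nb i).card ≤ din)
    (hdout : ∀ j, (Finset.univ.filter fun i => j ∈ St.Nb i).card ≤ dout)
    (Xmax Ymax : ℝ)
    (hXmax : ∀ i, (∑ k, |St.X i k|) ≤ Xmax)
    (hYmax : ∀ i, (∑ s ∈ SNIPE.Sb St.n β St.Nb i, |St.α i s|) ≤ Ymax)
    (θ : Fin dX → ℝ) :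
    St.E (St.tteHat θ) = St.tte ∧
    variance (St.tteHat θ) St.μ ≤
      4 * din * dout * (Ymax + SNIPE.l2 θ * Xmax) ^ 2 / St.n *
        (Real.exp 1 * din / β * max (4 * (β : ℝ) ^ 2) (1 / (p * (1 - p)))) ^ β := by
  set K := (Real.exp 1 * din / β * max (4 * (β : ℝ) ^ 2) (1 / (p * (1 - p)))) ^ β
  set A := Ymax + SNIPE.l2 θ * Xmax
  have hA (i : Fin St.n) (x : St.Ω) : |St.Yo i x - ∑ k, θ k * St.X i k| ≤ A :=
    (abs_sub _ _).trans (add_le_add (St.abs_Yo_le (hYmax i) x)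
      ((abs_sum_mul_le_l2_mul θ (St.X i)).trans
        (mul_le_mul_of_nonneg_left (hXmax i) (Real.sqrt_nonneg _))))
  have hvar (i : Fin St.n) : Var[fun x => St.summand θ i (St.Z · x); St.μ] ≤ A ^ 2 * (4 * K) :=
    (St.variance_summand_le θ i (hA i)).trans
      (mul_le_mul_of_nonneg_left (St.integral_w_sq_le hp hβ (hdin i)) (sq_nonneg A))
  have hrow (i : Fin St.n) : ∑ i', cov[fun x => St.summand θ i (St.Z · x),
      fun x => St.summand θ i' (St.Z · x); St.μ] ≤ din * dout * (A ^ 2 * (4 * K)) :=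
    (St.sum_covariance_summand_le θ i hvar).trans <|
      mul_le_mul_of_nonneg_right (mod_cast (St.card_nbrs_le hdout i).trans
        (Nat.mul_le_mul_right _ (hdin i))) ((variance_nonneg _ _).trans (hvar i))
  refine ⟨St.integral_tteHat hp θ, ?_⟩
  rw [St.tteHat_eq, variance_const_mul, variance_fun_sum fun i =>
    St.memLp_comp_Z (St.measurable_summand θ i) 2]
  calc (St.n : ℝ)⁻¹ ^ 2 * ∑ i, ∑ i', _
      ≤ (St.n : ℝ)⁻¹ ^ 2 * ∑ _i : Fin St.n, din * dout * (A ^ 2 * (4 * K)) := by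
        gcongr with i; exact hrow i
    _ = 4 * din * dout * A ^ 2 / St.n * K := by
        have hinv : (St.n : ℝ)⁻¹ ^ 2 * St.n = (St.n : ℝ)⁻¹ := by
          simpa [sq, mul_right_comm] using mul_inv_mul_cancel (St.n : ℝ)⁻¹
        rw [sum_const, card_univ, Fintype.card_fin, nsmul_eq_mul, ← mul_assoc, hinv]
        ring

/-- unbiasedness and variance bound of the covariate-adjusted SNIPE
estimator, Theorem 2: for any fixed `θ`, `E[TTÊ(θ)] = TTE` and
`Var(TTÊ(θ)) ≤ (4 d_in d_out (Y_max + ‖θ‖₂ X_max)²/n) ((e d_in/β) max(4β², 1/(p(1-p))))^β`. -/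
theorem statement_3 (β dX : ℕ) (hβ : 1 ≤ β) (p : ℝ) (hp : 0 < p) (hp' : p ≤ 1 / 2)
    (St : SNIPE.Setting β dX p) (hn : 0 < St.n) (hXc : ∑ i, St.X i = 0)
    (din dout : ℕ)
    (hdin : ∀ i, (St.Nb i).card ≤ din)
    (hdout : ∀ j, (Finset.univ.filter fun i => j ∈ St.Nb i).card ≤ dout)
    (Xmax Ymax : ℝ)
    (hXmax : ∀ i, (∑ k, |St.X i k|) ≤ Xmax)
    (hYmax : ∀ i, (∑ s ∈ SNIPE.Sb St.n β St.Nb i, |St.α i s|) ≤ Ymax)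
    (θ : Fin dX → ℝ) :
    St.E (St.tteHat θ) = St.tte ∧
    variance (St.tteHat θ) St.μ ≤
      4 * din * dout * (Ymax + SNIPE.l2 θ * Xmax) ^ 2 / St.n *
        (Real.exp 1 * din / β * max (4 * (β : ℝ) ^ 2) (1 / (p * (1 - p)))) ^ β :=
  statement_3_general β dX hβ p hp St din dout hdin hdout Xmax Ymax hXmax hYmax θ
end
end

section
/- For any subsets S, S', T, T' of {1,…,n}, the covariance satisfies 0 ≤ Cov( ∏_{j∈S} (Z_j − p_j)/(p_j(1−p_j)) · ∏_{j'∈S'} Z_{j'} , ∏_{k∈T} (Z_k − p_k)/(p_k(1−p_k)) · ∏_{k'∈T'} Z_{k'} ) ≤ 1{S △ T ⊆ S' ∪ T'} · (1/(p(1−p)))^{|S ∩ T|}, where S △ T = (S ∪ T) \ (S ∩ T) denotes the symmetric difference and 1{·} is the indicator. -/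
noncomputable section

open MeasureTheory ProbabilityTheory Filter Finset Topology SNIPE

/-!
Both arguments of the covariance are products over the coordinates `j` of functions
`f_j(Z_j)`, `g_j(Z_j)` of independent Bernoulli variables, so by independence
`E[fg] = ∏ u_j` and `E[f] E[g] = ∏ v_j` with `u_j = E[f_j g_j]`, `v_j = E[f_j] E[g_j]`.
For a Bernoulli(q) variable, `u_j - v_j = q(1-q)(f_j(1) - f_j(0))(g_j(1) - g_j(0))`, which is
nonnegative because every `f_j`, `g_j` is nondecreasing in `Z_j`; every `E[f_j]` is nonnegative as
well. Hence `0 ≤ ∏ v_j ≤ ∏ u_j`, so `0 ≤ Cov ≤ ∏ u_j`. Finally `u_j ≤ 1/(q(1-q)) ≤ 1/(p(1-p))`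
for `j ∈ S ∩ T`, `u_j ≤ 1` otherwise, and `u_j = 0` for `j ∈ S △ T` outside `S' ∪ T'`, since
there exactly one of the two factors is the centred variable `Z_j - q` up to scaling.
-/

def bernoulliMean (q : ℝ) (h : ℝ → ℝ) : ℝ := q * h 1 + (1 - q) * h 0

lemma bernoulliMean_mul_sub_mul (q : ℝ) (f g : ℝ → ℝ) :
    bernoulliMean q (f * g) - bernoulliMean q f * bernoulliMean q g =
      q * (1 - q) * (f 1 - f 0) * (g 1 - g 0) := by
  simp only [bernoulliMean, Pi.mul_apply]
  ring

lemma mul_bernoulliMean_le_bernoulliMean_mul {q : ℝ} (hq0 : 0 ≤ q) (hq1 : q ≤ 1) {f g : ℝ → ℝ}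
    (hf : f 0 ≤ f 1) (hg : g 0 ≤ g 1) :
    bernoulliMean q f * bernoulliMean q g ≤ bernoulliMean q (f * g) := by
  have : 0 ≤ q * (1 - q) * (f 1 - f 0) * (g 1 - g 0) :=
    mul_nonneg (mul_nonneg (mul_nonneg hq0 (sub_nonneg.2 hq1)) (sub_nonneg.2 hf)) (sub_nonneg.2 hg)
  linarith [bernoulliMean_mul_sub_mul q f g]

lemma inv_mul_one_sub_le_of_le_of_le {p q : ℝ} (hp : 0 < p) (hpq : p ≤ q) (hq : q ≤ 1 - p) :
    (q * (1 - q))⁻¹ ≤ 1 / (p * (1 - p)) := by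
  rw [one_div]
  exact inv_anti₀ (mul_pos hp (by linarith)) (by nlinarith)

section Bernoulli

variable {Ω : Type*} [MeasurableSpace Ω] {μ : Measure Ω} [IsProbabilityMeasure μ]

lemma integral_comp_eq_bernoulliMean {Z : Ω → ℝ} (hZ : Measurable Z)
    (h01 : ∀ x, Z x = 0 ∨ Z x = 1) {q : ℝ} (hq : 0 ≤ q)
    (hZq : μ (Z ⁻¹' {1}) = ENNReal.ofReal q) (h : ℝ → ℝ) :
    ∫ x, h (Z x) ∂μ = bernoulliMean q h := by
  have hA : MeasurableSet (Z ⁻¹' {1}) := hZ (measurableSet_singleton 1)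
  have hsplit : (fun x => h (Z x)) =
      fun x => h 0 + (h 1 - h 0) * (Z ⁻¹' {1}).indicator 1 x := by
    funext x
    rcases h01 x with hx | hx <;> simp [hx]
  rw [hsplit, integral_add (integrable_const _) (((integrable_const 1).indicator hA).const_mul _),
    integral_const, integral_const_mul, integral_indicator_one hA, probReal_univ, measureReal_def,
    hZq, ENNReal.toReal_ofReal hq, bernoulliMean]
  simp only [smul_eq_mul]
  ring

variable {ι : Type*} [Fintype ι] {Z : ι → Ω → ℝ} {q : ι → ℝ}
  (hZ : ∀ j, Measurable (Z j)) (hindep : iIndepFun Z μ) (h01 : ∀ j x, Z j x = 0 ∨ Z j x = 1)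
  (hq : ∀ j, 0 ≤ q j) (hZq : ∀ j, μ (Z j ⁻¹' {1}) = ENNReal.ofReal (q j))
include hZ hindep h01 hq hZq

lemma integral_prod_comp_eq_prod_bernoulliMean {F : ι → ℝ → ℝ} (hF : ∀ j, Measurable (F j)) :
    ∫ x, ∏ j, F j (Z j x) ∂μ = ∏ j, bernoulliMean (q j) (F j) := by
  rw [hindep.integral_fun_prod_comp (fun j => (hZ j).aemeasurable)
    (fun j => (hF j).aestronglyMeasurable)]
  exact prod_congr rfl fun j _ => integral_comp_eq_bernoulliMean (hZ j) (h01 j) (hq j) (hZq j) _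

lemma covr_prod_comp_eq {F G : ι → ℝ → ℝ} (hF : ∀ j, Measurable (F j))
    (hG : ∀ j, Measurable (G j)) :
    covr μ (fun x => ∏ j, F j (Z j x)) (fun x => ∏ j, G j (Z j x)) =
      ∏ j, bernoulliMean (q j) (F j * G j) -
        ∏ j, bernoulliMean (q j) (F j) * bernoulliMean (q j) (G j) := by
  have hprod {F : ι → ℝ → ℝ} (hF : ∀ j, Measurable (F j)) :=
    integral_prod_comp_eq_prod_bernoulliMean hZ hindep h01 hq hZq hF
  have hFG := hprod fun j => (hF j).mul (hG j)
  simp only [Pi.mul_apply] at hFG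
  simp only [covr, ← prod_mul_distrib]
  rw [hprod hF, hprod hG, hFG, prod_mul_distrib]

end Bernoulli

section Factor

variable {ι : Type*} [DecidableEq ι] (prob : ι → ℝ) (S S' : Finset ι)

def coordFactor (j : ι) (z : ℝ) : ℝ :=
  (if j ∈ S then (z - prob j) / (prob j * (1 - prob j)) else 1) * (if j ∈ S' then z else 1)

lemma measurable_coordFactor (j : ι) : Measurable (coordFactor prob S S' j) := by
  unfold coordFactor
  split_ifs <;> fun_prop

lemma prod_coordFactor [Fintype ι] (z : ι → ℝ) :
    ∏ j, coordFactor prob S S' j (z j) =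
      (∏ j ∈ S, (z j - prob j) / (prob j * (1 - prob j))) * ∏ j ∈ S', z j := by
  simp only [coordFactor, prod_mul_distrib, Fintype.prod_ite_mem]

variable {prob} {j : ι} (hq0 : 0 < prob j) (hq1 : prob j < 1)
include hq0 hq1

lemma coordFactor_one : coordFactor prob S S' j 1 = if j ∈ S then (prob j)⁻¹ else 1 := by
  have : 1 - prob j ≠ 0 := by linarith
  unfold coordFactor
  split_ifs <;> field_simp

lemma coordFactor_zero :
    coordFactor prob S S' j 0 = if j ∈ S' then 0 else if j ∈ S then -(1 - prob j)⁻¹ else 1 := by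
  have : 1 - prob j ≠ 0 := by linarith
  unfold coordFactor
  split_ifs <;> field_simp <;> ring

lemma coordFactor_zero_le_coordFactor_one :
    coordFactor prob S S' j 0 ≤ coordFactor prob S S' j 1 := by
  have : 0 < 1 - prob j := by linarith
  rw [coordFactor_one S S' hq0 hq1, coordFactor_zero S S' hq0 hq1]
  split_ifs <;> linarith [inv_pos.2 hq0, inv_pos.2 this]

lemma bernoulliMean_coordFactor_nonneg : 0 ≤ bernoulliMean (prob j) (coordFactor prob S S' j) := by
  have : 0 < 1 - prob j := by linarith
  rw [bernoulliMean, coordFactor_one S S' hq0 hq1, coordFactor_zero S S' hq0 hq1]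
  split_ifs <;> field_simp <;> linarith

variable (T T' : Finset ι)

lemma mul_bernoulliMean_coordFactor_nonneg :
    0 ≤ bernoulliMean (prob j) (coordFactor prob S S' j) *
      bernoulliMean (prob j) (coordFactor prob T T' j) :=
  mul_nonneg (bernoulliMean_coordFactor_nonneg S S' hq0 hq1)
    (bernoulliMean_coordFactor_nonneg T T' hq0 hq1)

lemma mul_bernoulliMean_coordFactor_le :
    bernoulliMean (prob j) (coordFactor prob S S' j) *
        bernoulliMean (prob j) (coordFactor prob T T' j) ≤
      bernoulliMean (prob j) (coordFactor prob S S' j * coordFactor prob T T' j) :=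
  mul_bernoulliMean_le_bernoulliMean_mul hq0.le hq1.le
    (coordFactor_zero_le_coordFactor_one S S' hq0 hq1)
    (coordFactor_zero_le_coordFactor_one T T' hq0 hq1)

lemma bernoulliMean_coordFactor_mul_le :
    bernoulliMean (prob j) (coordFactor prob S S' j * coordFactor prob T T' j) ≤
      if j ∈ S ∩ T then (prob j * (1 - prob j))⁻¹ else 1 := by
  have : 0 < 1 - prob j := by linarith
  rw [bernoulliMean, Pi.mul_apply, Pi.mul_apply, coordFactor_one S S' hq0 hq1,
    coordFactor_zero S S' hq0 hq1, coordFactor_one T T' hq0 hq1, coordFactor_zero T T' hq0 hq1]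
  simp only [mem_inter]
  split_ifs <;> first | tauto | field_simp; nlinarith

lemma bernoulliMean_coordFactor_mul_eq_zero (hST : j ∈ (S ∪ T) \ (S ∩ T)) (hST' : j ∉ S' ∪ T') :
    bernoulliMean (prob j) (coordFactor prob S S' j * coordFactor prob T T' j) = 0 := by
  have : 0 < 1 - prob j := by linarith
  simp only [Finset.mem_sdiff, mem_union, mem_inter, not_or, not_and] at hST hST'
  rw [bernoulliMean, Pi.mul_apply, Pi.mul_apply, coordFactor_one S S' hq0 hq1,
    coordFactor_zero S S' hq0 hq1, coordFactor_one T T' hq0 hq1, coordFactor_zero T T' hq0 hq1]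
  split_ifs <;> first | tauto | field_simp; ring

end Factor

lemma prod_bernoulliMean_coordFactor_mul_le {ι : Type*} [Fintype ι] [DecidableEq ι] {prob : ι → ℝ}
    {p : ℝ} (hp : 0 < p) (hprob : ∀ j, p ≤ prob j ∧ prob j ≤ 1 - p) (S S' T T' : Finset ι) :
    ∏ j, bernoulliMean (prob j) (coordFactor prob S S' j * coordFactor prob T T' j) ≤
      (if (S ∪ T) \ (S ∩ T) ⊆ S' ∪ T' then (1 : ℝ) else 0) *
        (1 / (p * (1 - p))) ^ (S ∩ T).card := by
  have hq0 j : 0 < prob j := hp.trans_le (hprob j).1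
  have hq1 j : prob j < 1 := by linarith [hprob j]
  split_ifs with hsub
  · calc ∏ j, bernoulliMean (prob j) (coordFactor prob S S' j * coordFactor prob T T' j)
        ≤ ∏ j, if j ∈ S ∩ T then 1 / (p * (1 - p)) else 1 := by
          refine prod_le_prod (fun j _ => ?_) fun j _ => ?_
          · exact (mul_bernoulliMean_coordFactor_nonneg S S' (hq0 j) (hq1 j) T T').trans
              (mul_bernoulliMean_coordFactor_le S S' (hq0 j) (hq1 j) T T')
          · refine (bernoulliMean_coordFactor_mul_le S S' (hq0 j) (hq1 j) T T').trans ?_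
            split_ifs
            exacts [inv_mul_one_sub_le_of_le_of_le hp (hprob j).1 (hprob j).2, le_rfl]
      _ = _ := by rw [Fintype.prod_ite_mem, prod_const, one_mul]
  · obtain ⟨j, hST, hST'⟩ := not_subset.1 hsub
    have hj := bernoulliMean_coordFactor_mul_eq_zero S S' (hq0 j) (hq1 j) T T' hST hST'
    rw [prod_eq_zero (mem_univ j) hj, zero_mul]

theorem statement_5_general {Ω : Type} [MeasurableSpace Ω]
    (μ : Measure Ω) [IsProbabilityMeasure μ]
    (n : ℕ) (p : ℝ) (hp : 0 < p)
    (prob : Fin n → ℝ) (hprob : ∀ j, p ≤ prob j ∧ prob j ≤ 1 - p)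
    (Z : Fin n → Ω → ℝ) (hmeas : ∀ j, Measurable (Z j))
    (hindep : iIndepFun Z μ)
    (h01 : ∀ j x, Z j x = 0 ∨ Z j x = 1)
    (hZp : ∀ j, μ (Z j ⁻¹' {1}) = ENNReal.ofReal (prob j))
    (S S' T T' : Finset (Fin n)) :
    0 ≤ SNIPE.covr μ
        (fun x => (∏ j ∈ S, (Z j x - prob j) / (prob j * (1 - prob j))) * ∏ j' ∈ S', Z j' x)
        (fun x => (∏ k ∈ T, (Z k x - prob k) / (prob k * (1 - prob k))) * ∏ k' ∈ T', Z k' x) ∧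
    SNIPE.covr μ
        (fun x => (∏ j ∈ S, (Z j x - prob j) / (prob j * (1 - prob j))) * ∏ j' ∈ S', Z j' x)
        (fun x => (∏ k ∈ T, (Z k x - prob k) / (prob k * (1 - prob k))) * ∏ k' ∈ T', Z k' x) ≤
      (if (S ∪ T) \ (S ∩ T) ⊆ S' ∪ T' then (1 : ℝ) else 0) *
        (1 / (p * (1 - p))) ^ (S ∩ T).card := by
  have hq0 j : 0 < prob j := hp.trans_le (hprob j).1
  have hq1 j : prob j < 1 := by linarith [hprob j]
  have hcov := covr_prod_comp_eq hmeas hindep h01 (fun j => (hq0 j).le) hZp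
    (measurable_coordFactor prob S S') (measurable_coordFactor prob T T')
  simp only [prod_coordFactor] at hcov
  have hv_nonneg : 0 ≤ ∏ j, bernoulliMean (prob j) (coordFactor prob S S' j) *
      bernoulliMean (prob j) (coordFactor prob T T' j) :=
    prod_nonneg fun j _ => mul_bernoulliMean_coordFactor_nonneg S S' (hq0 j) (hq1 j) T T'
  have hv_le_u := prod_le_prod (s := univ)
    (fun j _ => mul_bernoulliMean_coordFactor_nonneg S S' (hq0 j) (hq1 j) T T')
    fun j _ => mul_bernoulliMean_coordFactor_le S S' (hq0 j) (hq1 j) T T'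
  have hu_le := prod_bernoulliMean_coordFactor_mul_le hp hprob S S' T T'
  rw [hcov]
  constructor <;> linarith

/-- Lemma 4 of Cortez-Rodriguez, Eichhorn and Yu: the covariance bound
`0 ≤ Cov(∏_(j∈S)(Z_j-p_j)/(p_j(1-p_j)) ∏_(j'∈S') Z_j', ∏_(k∈T)(Z_k-p_k)/(p_k(1-p_k)) ∏_(k'∈T') Z_k')
≤ 1{S △ T ⊆ S' ∪ T'} (1/(p(1-p)))^|S ∩ T|`. -/
theorem statement_5 {Ω : Type} [MeasurableSpace Ω]
    (μ : Measure Ω) [IsProbabilityMeasure μ]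
    (n : ℕ) (p : ℝ) (hp : 0 < p) (hp' : p ≤ 1 / 2)
    (prob : Fin n → ℝ) (hprob : ∀ j, p ≤ prob j ∧ prob j ≤ 1 - p)
    (Z : Fin n → Ω → ℝ) (hmeas : ∀ j, Measurable (Z j))
    (hindep : iIndepFun Z μ)
    (h01 : ∀ j x, Z j x = 0 ∨ Z j x = 1)
    (hZp : ∀ j, μ (Z j ⁻¹' {1}) = ENNReal.ofReal (prob j))
    (S S' T T' : Finset (Fin n)) :
    0 ≤ SNIPE.covr μ
        (fun x => (∏ j ∈ S, (Z j x - prob j) / (prob j * (1 - prob j))) * ∏ j' ∈ S', Z j' x)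
        (fun x => (∏ k ∈ T, (Z k x - prob k) / (prob k * (1 - prob k))) * ∏ k' ∈ T', Z k' x) ∧
    SNIPE.covr μ
        (fun x => (∏ j ∈ S, (Z j x - prob j) / (prob j * (1 - prob j))) * ∏ j' ∈ S', Z j' x)
        (fun x => (∏ k ∈ T, (Z k x - prob k) / (prob k * (1 - prob k))) * ∏ k' ∈ T', Z k' x) ≤
      (if (S ∪ T) \ (S ∩ T) ⊆ S' ∪ T' then (1 : ℝ) else 0) *
        (1 / (p * (1 - p))) ^ (S ∩ T).card :=
  statement_5_general μ n p hp prob hprob Z hmeas hindep h01 hZp S S' T T'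
end
end
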